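/- arXiv:2107.05074 — 4 statements merged into one kernel-verified Lean document; each statement's English description precedes it below -/
import Mathlib

section
/- Fix n ≥ 300 and d ∈ ℕ with d ≥ ln(10)·2^n + 1. For every function R : ℝ^d → ℝ there exists j* ∈ {1,…,d} such that, for the distribution D = D(1/10, 1/2, e_{j*}) on Z, the population loss F(w) = E_{z∼D}[f_A(w;z)] is convex and 1-Lipschitz with unique minimizer e_{j*} and inf_w F(w) = 0, and for every selection map w_RERM : Z^n → ℝ^d with w_RERM(S) ∈ argmin_{w∈ℝ^d} [(1/n)∑_{i=1}^n f_A(w; z_i) + R(w)] for every sample S = (z₁,…,z_n), one has E_{S∼D^n}[F(w_RERM(S))] − inf_{w∈ℝ^d} F(w) ≥ 1/20000. -/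
open scoped RealInnerProductSpace

/-- Instance space `Z = {0,1}^d × {−1,1} × {0, e₁, …, e_d}`: the boolean vector encodes `x`,
the boolean encodes `y` (`true ↦ +1`, `false ↦ −1`), and `Option (Fin d)` encodes `α`
(`none ↦ 0`, `some j ↦ e_j`). -/
abbrev ZA (d : ℕ) := (Fin d → Bool) × Bool × Option (Fin d)

/-- The vector `0` (for `none`) or the standard basis vector `e_j` (for `some j`). -/
noncomputable def stdVec (d : ℕ) (a : Option (Fin d)) : EuclideanSpace ℝ (Fin d) :=
  (WithLp.equiv 2 (Fin d → ℝ)).symm (fun j => if a = some j then 1 else 0)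

/-- Coordinatewise (Hadamard) product of a vector with a boolean mask `x ∈ {0,1}^d`. -/
noncomputable def hadamard {d : ℕ} (v : EuclideanSpace ℝ (Fin d)) (x : Fin d → Bool) :
    EuclideanSpace ℝ (Fin d) :=
  (WithLp.equiv 2 (Fin d → ℝ)).symm (fun j => v j * (if x j then 1 else 0))

/-- The loss `f_A(w; (x,y,α)) = y‖(w−α)⊙x‖`. -/
noncomputable def fA (d : ℕ) (w : EuclideanSpace ℝ (Fin d)) (z : ZA d) : ℝ :=
  (if z.2.1 then (1 : ℝ) else -1) * ‖hadamard (w - stdVec d z.2.2) z.1‖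

/-- Probability mass function of the distribution `D(δ, p, a)`: coordinates of `x` are
i.i.d. Bernoulli(p), `y = +1` w.p. `1/2+δ` and `y = −1` w.p. `1/2−δ`, and `α = a`. -/
noncomputable def massA (d : ℕ) (δ p : ℝ) (a : Option (Fin d)) (z : ZA d) : ℝ :=
  (∏ j, if z.1 j then p else 1 - p) *
    ((if z.2.1 then 1 / 2 + δ else 1 / 2 - δ) * (if z.2.2 = a then 1 else 0))

/-- Population loss `F(w) = E_{z ∼ D(δ,p,a)}[f_A(w;z)]`, written as a finite sum. -/
noncomputable def popLossA (d : ℕ) (δ p : ℝ) (a : Option (Fin d))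
    (w : EuclideanSpace ℝ (Fin d)) : ℝ :=
  ∑ z : ZA d, massA d δ p a z * fA d w z

namespace S3
open Finset Real

variable {d : ℕ}

lemma hadamard_apply (v : EuclideanSpace ℝ (Fin d)) (x : Fin d → Bool) (j : Fin d) :
    hadamard v x j = v j * (if x j then 1 else 0) := rfl

lemma stdVec_apply (a : Option (Fin d)) (j : Fin d) :
    stdVec d a j = if a = some j then 1 else 0 := rfl

lemma hadamard_sub (v w : EuclideanSpace ℝ (Fin d)) (x : Fin d → Bool) :
    hadamard (v - w) x = hadamard v x - hadamard w x := by
  ext j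
  simp only [hadamard_apply, PiLp.sub_apply]
  split_ifs <;> ring

lemma hadamard_zero (x : Fin d → Bool) : hadamard (0 : EuclideanSpace ℝ (Fin d)) x = 0 := by
  ext j
  simp [hadamard_apply]

lemma hadamard_smul (c : ℝ) (v : EuclideanSpace ℝ (Fin d)) (x : Fin d → Bool) :
    hadamard (c • v) x = c • hadamard v x := by
  ext j
  simp only [hadamard_apply, PiLp.smul_apply, smul_eq_mul]
  ring

lemma hadamard_add (v w : EuclideanSpace ℝ (Fin d)) (x : Fin d → Bool) :
    hadamard (v + w) x = hadamard v x + hadamard w x := by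
  ext j
  simp only [hadamard_apply, PiLp.add_apply]
  split_ifs <;> ring

lemma hadamard_false (v : EuclideanSpace ℝ (Fin d)) :
    hadamard v (fun _ => false) = 0 := by
  ext j
  simp [hadamard_apply]

lemma hadamard_true (v : EuclideanSpace ℝ (Fin d)) :
    hadamard v (fun _ => true) = v := by
  ext j
  simp [hadamard_apply]

lemma normsq_had (v : EuclideanSpace ℝ (Fin d)) (x : Fin d → Bool) :
    ‖hadamard v x‖ ^ 2 = ∑ j, (v j) ^ 2 * (if x j then 1 else 0) := by
  rw [EuclideanSpace.norm_eq, Real.sq_sqrt (by positivity)]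
  refine Finset.sum_congr rfl fun j _ => ?_
  rw [hadamard_apply]
  rcases Bool.dichotomy (x j) with h | h <;> simp [h, Real.norm_eq_abs, sq_abs]

lemma normsq_eq (v : EuclideanSpace ℝ (Fin d)) : ‖v‖ ^ 2 = ∑ j, (v j) ^ 2 := by
  rw [EuclideanSpace.norm_eq, Real.sq_sqrt (by positivity)]
  exact Finset.sum_congr rfl fun j _ => by rw [Real.norm_eq_abs, sq_abs]

lemma norm_had_le (v : EuclideanSpace ℝ (Fin d)) (x : Fin d → Bool) :
    ‖hadamard v x‖ ≤ ‖v‖ := by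
  have h1 : ‖hadamard v x‖ ^ 2 ≤ ‖v‖ ^ 2 := by
    rw [normsq_had, normsq_eq]
    refine Finset.sum_le_sum fun j _ => ?_
    rcases Bool.dichotomy (x j) with h | h <;> simp [h] <;> positivity
  exact (pow_le_pow_iff_left₀ (norm_nonneg _) (norm_nonneg _) two_ne_zero).mp h1

lemma fA_lip (z : ZA d) (w w' : EuclideanSpace ℝ (Fin d)) :
    |fA d w z - fA d w' z| ≤ ‖w - w'‖ := by
  unfold fA
  have key : |‖hadamard (w - stdVec d z.2.2) z.1‖ - ‖hadamard (w' - stdVec d z.2.2) z.1‖|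
      ≤ ‖w - w'‖ := by
    calc _ ≤ ‖hadamard (w - stdVec d z.2.2) z.1 - hadamard (w' - stdVec d z.2.2) z.1‖ :=
          abs_norm_sub_norm_le _ _
    _ = ‖hadamard (w - w') z.1‖ := by
          rw [← hadamard_sub]
          congr 2
          abel
    _ ≤ ‖w - w'‖ := norm_had_le _ _
  rcases z.2.1 with _|_
  · simpa [abs_sub_comm, neg_add_eq_sub] using key
  · simpa using key


lemma sum_bool_coord (j : Fin d) (f : Bool → ℝ) :
    ∑ x : Fin d → Bool, f (x j) = 2 ^ d / 2 * (f true + f false) := by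
  classical
  have hinv : Function.Involutive (fun x : Fin d → Bool => Function.update x j (!(x j))) := by
    intro x
    ext k
    by_cases h : k = j
    · subst h; simp
    · simp [Function.update_of_ne h]
  have key : ∑ x : Fin d → Bool, f (x j) = ∑ x : Fin d → Bool, f (!(x j)) := by
    refine Fintype.sum_bijective _ hinv.bijective _ _ fun x => ?_
    simp
  have h2 : (2:ℝ) * ∑ x : Fin d → Bool, f (x j) =
      ∑ x : Fin d → Bool, (f true + f false) := by
    rw [two_mul]
    nth_rewrite 2 [key]
    rw [← Finset.sum_add_distrib]
    refine Finset.sum_congr rfl fun x _ => ?_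
    rcases Bool.dichotomy (x j) with h | h <;> simp [h] <;> ring
  have h3 : ∑ x : Fin d → Bool, (f true + f false) = 2^d * (f true + f false) := by
    rw [Finset.sum_const, Finset.card_univ]
    simp [Fintype.card_fun]
    ring
  rw [h3] at h2
  linarith

lemma mass_eq (a : Option (Fin d)) (z : ZA d) :
    massA d (1/10) (1/2) a z =
      ((2:ℝ) ^ d)⁻¹ * ((if z.2.1 then 3/5 else 2/5) * (if z.2.2 = a then 1 else 0)) := by
  unfold massA
  have h1 : (∏ j, if z.1 j then (1/2:ℝ) else 1 - 1/2) = ((2:ℝ)^d)⁻¹ := by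
    have : ∀ j ∈ Finset.univ, (if z.1 j then (1/2:ℝ) else 1 - 1/2) = 1/2 := by
      intro j _; split_ifs <;> norm_num
    rw [Finset.prod_congr rfl this, Finset.prod_const, Finset.card_univ, Fintype.card_fin]
    rw [one_div, inv_pow]
  rw [h1]
  norm_num

lemma mass_nonneg (a : Option (Fin d)) (z : ZA d) : 0 ≤ massA d (1/10) (1/2) a z := by
  rw [mass_eq]
  split_ifs <;> positivity

lemma popLoss_eq (j : Fin d) (w : EuclideanSpace ℝ (Fin d)) :
    popLossA d (1/10) (1/2) (some j) w =
      (1/5) * ∑ x : Fin d → Bool, ((2:ℝ) ^ d)⁻¹ * ‖hadamard (w - stdVec d (some j)) x‖ := by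
  unfold popLossA
  rw [Fintype.sum_prod_type]
  rw [Finset.mul_sum]
  refine Finset.sum_congr rfl fun x _ => ?_
  rw [Fintype.sum_prod_type]
  have hcollapse : ∀ y : Bool, ∑ b : Option (Fin d), massA d (1/10) (1/2) (some j) (x, y, b) * fA d w (x, y, b)
      = ((2:ℝ)^d)⁻¹ * ((if y then 3/5 else 2/5) * fA d w (x, y, some j)) := by
    intro y
    have : ∀ b : Option (Fin d),
        massA d (1/10) (1/2) (some j) (x, y, b) * fA d w (x, y, b)
        = if b = some j then ((2:ℝ)^d)⁻¹ * ((if y then 3/5 else 2/5) * fA d w (x, y, b)) else 0 := by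
      intro b
      rw [mass_eq]
      by_cases h : b = some j <;> simp [h] <;> ring
    rw [Finset.sum_congr rfl fun b _ => this b, Finset.sum_ite_eq']
    simp
  rw [Fintype.sum_bool, hcollapse, hcollapse]
  unfold fA
  norm_num
  ring

lemma popLoss_nonneg (j : Fin d) (w : EuclideanSpace ℝ (Fin d)) :
    0 ≤ popLossA d (1/10) (1/2) (some j) w := by
  rw [popLoss_eq]
  positivity

lemma popLoss_min (j : Fin d) :
    popLossA d (1/10) (1/2) (some j) (stdVec d (some j)) = 0 := by
  rw [popLoss_eq]
  have : ∀ x : Fin d → Bool, ‖hadamard (stdVec d (some j) - stdVec d (some j)) x‖ = 0 := by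
    intro x
    rw [sub_self, hadamard_zero, norm_zero]
  simp [sub_self, hadamard_zero]

lemma popLoss_lip (j : Fin d) :
    LipschitzWith 1 (popLossA d (1/10) (1/2) (some j)) := by
  refine LipschitzWith.of_dist_le_mul fun w w' => ?_
  rw [Real.dist_eq, dist_eq_norm, NNReal.coe_one, one_mul]
  rw [popLoss_eq, popLoss_eq, ← mul_sub, ← Finset.sum_sub_distrib]
  have habs : |∑ x : Fin d → Bool, (((2:ℝ)^d)⁻¹ * ‖hadamard (w - stdVec d (some j)) x‖ -
      ((2:ℝ)^d)⁻¹ * ‖hadamard (w' - stdVec d (some j)) x‖)| ≤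
      ∑ x : Fin d → Bool, ((2:ℝ)^d)⁻¹ * ‖w - w'‖ := by
    refine (Finset.abs_sum_le_sum_abs _ _).trans (Finset.sum_le_sum fun x _ => ?_)
    rw [← mul_sub, abs_mul, abs_of_nonneg (by positivity : (0:ℝ) ≤ ((2:ℝ)^d)⁻¹)]
    refine mul_le_mul_of_nonneg_left ?_ (by positivity)
    calc |‖hadamard (w - stdVec d (some j)) x‖ - ‖hadamard (w' - stdVec d (some j)) x‖|
        ≤ ‖hadamard (w - stdVec d (some j)) x - hadamard (w' - stdVec d (some j)) x‖ :=
          abs_norm_sub_norm_le _ _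
      _ = ‖hadamard (w - w') x‖ := by rw [← hadamard_sub]; congr 2; abel
      _ ≤ ‖w - w'‖ := norm_had_le _ _
  have hsum : ∑ x : Fin d → Bool, ((2:ℝ)^d)⁻¹ * ‖w - w'‖ = ‖w - w'‖ := by
    rw [Finset.sum_const, Finset.card_univ]
    simp [Fintype.card_fun]
  rw [abs_mul]
  calc |1/5| * |∑ x : Fin d → Bool, _| ≤ |1/5| * ‖w - w'‖ := by
        refine mul_le_mul_of_nonneg_left ?_ (abs_nonneg _)
        rw [← hsum]; exact habs
    _ ≤ ‖w - w'‖ := by rw [abs_of_nonneg (by norm_num : (0:ℝ) ≤ 1/5)]; nlinarith [norm_nonneg (w - w')]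


lemma popLoss_convex (j : Fin d) :
    ConvexOn ℝ Set.univ (popLossA d (1/10) (1/2) (some j)) := by
  refine ⟨convex_univ, fun w1 _ w2 _ a b ha hb hab => ?_⟩
  rw [popLoss_eq, popLoss_eq, popLoss_eq]
  have key : ∀ x : Fin d → Bool,
      ‖hadamard (a • w1 + b • w2 - stdVec d (some j)) x‖ ≤
        a * ‖hadamard (w1 - stdVec d (some j)) x‖ + b * ‖hadamard (w2 - stdVec d (some j)) x‖ := by
    intro x
    have hdec : a • w1 + b • w2 - stdVec d (some j)
        = a • (w1 - stdVec d (some j)) + b • (w2 - stdVec d (some j)) := by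
      have h1 : stdVec d (some j) = (a + b) • stdVec d (some j) := by rw [hab, one_smul]
      nth_rewrite 1 [h1]
      module
    rw [hdec, hadamard_add, hadamard_smul, hadamard_smul]
    calc ‖a • hadamard (w1 - stdVec d (some j)) x + b • hadamard (w2 - stdVec d (some j)) x‖
        ≤ ‖a • hadamard (w1 - stdVec d (some j)) x‖ + ‖b • hadamard (w2 - stdVec d (some j)) x‖ :=
          norm_add_le _ _
      _ = a * ‖hadamard (w1 - stdVec d (some j)) x‖ + b * ‖hadamard (w2 - stdVec d (some j)) x‖ := by
          rw [norm_smul, norm_smul, Real.norm_eq_abs, Real.norm_eq_abs,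
            abs_of_nonneg ha, abs_of_nonneg hb]
  have hsum : ∑ x : Fin d → Bool, ((2:ℝ)^d)⁻¹ * ‖hadamard (a • w1 + b • w2 - stdVec d (some j)) x‖
      ≤ a * (∑ x : Fin d → Bool, ((2:ℝ)^d)⁻¹ * ‖hadamard (w1 - stdVec d (some j)) x‖)
        + b * (∑ x : Fin d → Bool, ((2:ℝ)^d)⁻¹ * ‖hadamard (w2 - stdVec d (some j)) x‖) := by
    rw [Finset.mul_sum, Finset.mul_sum, ← Finset.sum_add_distrib]
    refine Finset.sum_le_sum fun x _ => ?_
    have := key x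
    have hc : (0:ℝ) ≤ ((2:ℝ)^d)⁻¹ := by positivity
    nlinarith [key x]
  simp only [smul_eq_mul]
  nlinarith [hsum]

lemma popLoss_ge (j : Fin d) (w : EuclideanSpace ℝ (Fin d)) :
    ‖w - stdVec d (some j)‖ / 10 ≤ popLossA d (1/10) (1/2) (some j) w := by
  set v := w - stdVec d (some j) with hv
  by_cases hv0 : v = 0
  · rw [hv0, norm_zero]
    simpa using popLoss_nonneg j w
  have hvn : 0 < ‖v‖ := norm_pos_iff.mpr hv0
  have hterm : ∀ x : Fin d → Bool,
      (∑ k, (v k)^2 * (if x k then (1:ℝ) else 0)) / ‖v‖ ≤ ‖hadamard v x‖ := by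
    intro x
    rw [div_le_iff₀ hvn, ← normsq_had]
    nlinarith [norm_had_le v x, norm_nonneg (hadamard v x)]
  have hswap : ∑ x : Fin d → Bool, (∑ k, (v k)^2 * (if x k then (1:ℝ) else 0))
      = 2^d/2 * ‖v‖^2 := by
    rw [Finset.sum_comm]
    have hk : ∀ k : Fin d, ∑ x : Fin d → Bool, (v k)^2 * (if x k then (1:ℝ) else 0)
        = 2^d/2 * (v k)^2 := by
      intro k
      rw [sum_bool_coord k (fun b => (v k)^2 * (if b then (1:ℝ) else 0))]
      norm_num
    rw [Finset.sum_congr rfl fun k _ => hk k, ← Finset.mul_sum, normsq_eq]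
  rw [popLoss_eq, ← hv]
  have h1 : ∑ x : Fin d → Bool, ((2:ℝ)^d)⁻¹ * ((∑ k, (v k)^2 * (if x k then (1:ℝ) else 0)) / ‖v‖)
      ≤ ∑ x : Fin d → Bool, ((2:ℝ)^d)⁻¹ * ‖hadamard v x‖ :=
    Finset.sum_le_sum fun x _ => mul_le_mul_of_nonneg_left (hterm x) (by positivity)
  have h2 : ∑ x : Fin d → Bool, ((2:ℝ)^d)⁻¹ * ((∑ k, (v k)^2 * (if x k then (1:ℝ) else 0)) / ‖v‖)
      = ‖v‖ / 2 := by
    rw [← Finset.mul_sum, ← Finset.sum_div, hswap]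
    have h2d : ((2:ℝ)^d) ≠ 0 := by positivity
    field_simp
  rw [h2] at h1
  linarith

lemma popLoss_eq_zero (j : Fin d) (w : EuclideanSpace ℝ (Fin d))
    (h : popLossA d (1/10) (1/2) (some j) w = 0) : w = stdVec d (some j) := by
  have := popLoss_ge j w
  rw [h] at this
  have : ‖w - stdVec d (some j)‖ ≤ 0 := by linarith
  have : w - stdVec d (some j) = 0 := by
    simpa using le_antisymm this (norm_nonneg _)
  rwa [sub_eq_zero] at this

lemma popLoss_inf (j : Fin d) : (⨅ w, popLossA d (1/10) (1/2) (some j) w) = 0 := by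
  refine le_antisymm ?_ (le_ciInf fun w => popLoss_nonneg j w)
  have hb : BddBelow (Set.range (popLossA d (1/10) (1/2) (some j))) :=
    ⟨0, by rintro y ⟨w, rfl⟩; exact popLoss_nonneg j w⟩
  exact (ciInf_le hb (stdVec d (some j))).trans_eq (popLoss_min j)


section Prob
variable {n : ℕ}

lemma sum_prod_fun {ι κ : Type*} [Fintype ι] [Fintype κ] [DecidableEq ι] (h : ι → κ → ℝ) :
    ∑ S : ι → κ, ∏ i, h i (S i) = ∏ i, ∑ z, h i z := by
  rw [Finset.prod_univ_sum]
  rw [Fintype.piFinset_univ]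

lemma exp_one (m : ZA d → ℝ) (hm : ∑ z, m z = 1) (g : ZA d → ℝ) (i0 : Fin n) :
    ∑ S : Fin n → ZA d, (∏ i, m (S i)) * g (S i0) = ∑ z, m z * g z := by
  have key : ∀ S : Fin n → ZA d, (∏ i, m (S i)) * g (S i0)
      = ∏ i, (m (S i) * (if i = i0 then g (S i) else 1)) := by
    intro S
    rw [Finset.prod_mul_distrib, Finset.prod_ite_eq' Finset.univ i0 (fun i => g (S i))]
    simp
  rw [Finset.sum_congr rfl fun S _ => key S,
    sum_prod_fun (fun i z => m z * (if i = i0 then g z else 1))]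
  have : ∀ i : Fin n, (∑ z, m z * (if i = i0 then g z else 1))
      = if i = i0 then ∑ z, m z * g z else 1 := by
    intro i
    by_cases h : i = i0 <;> simp [h, hm]
  rw [Finset.prod_congr rfl fun i _ => this i,
    Finset.prod_ite_eq' Finset.univ i0 (fun _ => ∑ z, m z * g z)]
  simp

lemma exp_two (m : ZA d → ℝ) (hm : ∑ z, m z = 1) (g h : ZA d → ℝ) (i0 i1 : Fin n)
    (hne : i0 ≠ i1) :
    ∑ S : Fin n → ZA d, (∏ i, m (S i)) * (g (S i0) * h (S i1))
      = (∑ z, m z * g z) * (∑ z, m z * h z) := by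
  have key : ∀ S : Fin n → ZA d, (∏ i, m (S i)) * (g (S i0) * h (S i1))
      = ∏ i, (m (S i) * ((if i = i0 then g (S i) else 1) * (if i = i1 then h (S i) else 1))) := by
    intro S
    rw [Finset.prod_mul_distrib, Finset.prod_mul_distrib,
      Finset.prod_ite_eq' Finset.univ i0 (fun i => g (S i)),
      Finset.prod_ite_eq' Finset.univ i1 (fun i => h (S i))]
    simp
  rw [Finset.sum_congr rfl fun S _ => key S,
    sum_prod_fun (fun i z => m z * ((if i = i0 then g z else 1) * (if i = i1 then h z else 1)))]
  have hval : ∀ i : Fin n, (∑ z, m z * ((if i = i0 then g z else 1) * (if i = i1 then h z else 1)))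
      = if i = i0 then (∑ z, m z * g z) else if i = i1 then (∑ z, m z * h z) else 1 := by
    intro i
    by_cases h0 : i = i0
    · subst h0
      simp [hne]
    · by_cases h1 : i = i1
      · subst h1
        simp [h0]
      · simp [h0, h1, hm]
  rw [Finset.prod_congr rfl fun i _ => hval i]
  rw [← Finset.prod_erase_mul Finset.univ _ (Finset.mem_univ i0)]
  rw [← Finset.prod_erase_mul (Finset.univ.erase i0) _
    (Finset.mem_erase.mpr ⟨Ne.symm hne, Finset.mem_univ i1⟩)]
  have h1 : (if i1 = i0 then (∑ z, m z * g z) else if i1 = i1 then (∑ z, m z * h z) else 1)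
      = ∑ z, m z * h z := by simp [Ne.symm hne]
  have h2 : ∏ i ∈ (Finset.univ.erase i0).erase i1,
      (if i = i0 then (∑ z, m z * g z) else if i = i1 then (∑ z, m z * h z) else 1) = 1 := by
    refine Finset.prod_eq_one fun i hi => ?_
    rw [Finset.mem_erase] at hi
    have hi0 := (Finset.mem_erase.mp hi.2).1
    simp [hi.1, hi0]
  rw [h1, h2]
  simp
  ring

lemma exp_sum_sq (m : ZA d → ℝ) (hm : ∑ z, m z = 1) (φ : ZA d → ℝ)
    (hφ : ∑ z, m z * φ z = 0) :
    ∑ S : Fin n → ZA d, (∏ i, m (S i)) * (∑ i, φ (S i))^2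
      = n * (∑ z, m z * (φ z)^2) := by
  have expand : ∀ S : Fin n → ZA d, (∏ i, m (S i)) * (∑ i, φ (S i))^2
      = ∑ i : Fin n, ∑ i' : Fin n, (∏ i'', m (S i'')) * (φ (S i) * φ (S i')) := by
    intro S
    rw [sq, Finset.sum_mul_sum]
    rw [Finset.mul_sum]
    refine Finset.sum_congr rfl fun i _ => ?_
    rw [Finset.mul_sum]
  rw [Finset.sum_congr rfl fun S _ => expand S]
  rw [Finset.sum_comm]
  have swap2 : ∀ i : Fin n, ∑ S : Fin n → ZA d, ∑ i' : Fin n,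
        (∏ i'', m (S i'')) * (φ (S i) * φ (S i'))
      = ∑ i' : Fin n, ∑ S : Fin n → ZA d, (∏ i'', m (S i'')) * (φ (S i) * φ (S i')) :=
    fun i => Finset.sum_comm
  rw [Finset.sum_congr rfl fun i _ => swap2 i]
  have hcell : ∀ i i' : Fin n, ∑ S : Fin n → ZA d, (∏ i'', m (S i'')) * (φ (S i) * φ (S i'))
      = if i' = i then (∑ z, m z * (φ z)^2) else 0 := by
    intro i i'
    by_cases h : i' = i
    · subst h
      rw [if_pos rfl]
      have : ∀ z : ZA d, m z * (φ z)^2 = m z * (φ z * φ z) := fun z => by ring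
      rw [Finset.sum_congr rfl fun z _ => this z]
      exact exp_one m hm (fun z => φ z * φ z) i'
    · rw [if_neg h, exp_two m hm φ φ i i' (fun hh => h hh.symm), hφ]
      ring
  rw [Finset.sum_congr rfl fun i _ => Finset.sum_congr rfl fun i' _ => hcell i i']
  rw [Finset.sum_congr rfl fun i (_ : i ∈ Finset.univ) =>
    Finset.sum_ite_eq' Finset.univ i (fun _ => ∑ z, m z * (φ z)^2)]
  simp [Finset.card_univ, mul_comm]


lemma exp_z (j : Fin d) (G : Bool → Bool → ℝ) :
    ∑ z : ZA d, massA d (1/10) (1/2) (some j) z * G (z.1 j) z.2.1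
      = (3/5) * ((G true true + G false true)/2) + (2/5) * ((G true false + G false false)/2) := by
  rw [Fintype.sum_prod_type]
  have hx : ∀ x : Fin d → Bool,
      (∑ p : Bool × Option (Fin d), massA d (1/10) (1/2) (some j) (x, p) * G (x j) p.1)
      = ((2:ℝ)^d)⁻¹ * ((3/5) * G (x j) true + (2/5) * G (x j) false) := by
    intro x
    rw [Fintype.sum_prod_type]
    have hy : ∀ y : Bool, (∑ b : Option (Fin d),
          massA d (1/10) (1/2) (some j) (x, y, b) * G (x j) y)
        = ((2:ℝ)^d)⁻¹ * ((if y then 3/5 else 2/5) * G (x j) y) := by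
      intro y
      have hb : ∀ b : Option (Fin d), massA d (1/10) (1/2) (some j) (x, y, b) * G (x j) y
          = if b = some j then ((2:ℝ)^d)⁻¹ * ((if y then 3/5 else 2/5) * G (x j) y) else 0 := by
        intro b
        rw [mass_eq]
        by_cases h : b = some j <;> simp [h] <;> ring
      rw [Finset.sum_congr rfl fun b _ => hb b, Finset.sum_ite_eq']
      simp
    rw [Fintype.sum_bool, hy, hy]
    simp only [if_true, Bool.false_eq_true, if_false]
    ring
  rw [Finset.sum_congr rfl fun x _ => hx x]
  rw [sum_bool_coord j (fun b => ((2:ℝ)^d)⁻¹ * ((3/5) * G b true + (2/5) * G b false))]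
  have h2d : ((2:ℝ)^d) ≠ 0 := by positivity
  field_simp
  ring

lemma mass_sum_one (j : Fin d) : ∑ z : ZA d, massA d (1/10) (1/2) (some j) z = 1 := by
  have := exp_z j (fun _ _ => (1:ℝ))
  simp only [mul_one] at this
  rw [this]
  norm_num

/-- centered variable `φ = ψ + 1/10` -/
noncomputable def phiA (d : ℕ) (j : Fin d) (z : ZA d) : ℝ :=
  (if z.2.1 then (if z.1 j then (1:ℝ) else 0) else -1) + 1/10

lemma phi_mean (j : Fin d) : ∑ z : ZA d, massA d (1/10) (1/2) (some j) z * phiA d j z = 0 := by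
  have := exp_z j (fun b y => (if y then (if b then (1:ℝ) else 0) else -1) + 1/10)
  rw [show (fun z : ZA d => massA d (1/10) (1/2) (some j) z * phiA d j z)
    = fun z : ZA d => massA d (1/10) (1/2) (some j) z *
      ((if z.2.1 then (if z.1 j then (1:ℝ) else 0) else -1) + 1/10) from rfl, this]
  norm_num

lemma phi_var (j : Fin d) :
    ∑ z : ZA d, massA d (1/10) (1/2) (some j) z * (phiA d j z)^2 = 69/100 := by
  have := exp_z j (fun b y => ((if y then (if b then (1:ℝ) else 0) else -1) + 1/10)^2)
  rw [show (fun z : ZA d => massA d (1/10) (1/2) (some j) z * (phiA d j z)^2)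
    = fun z : ZA d => massA d (1/10) (1/2) (some j) z *
      ((if z.2.1 then (if z.1 j then (1:ℝ) else 0) else -1) + 1/10)^2 from rfl, this]
  norm_num


open Classical in
lemma cheb (j : Fin d) (hn : 300 ≤ n) :
    ∑ S : Fin n → ZA d, (∏ i, massA d (1/10) (1/2) (some j) (S i)) *
      (if (2*(n:ℝ))/25 < ∑ i, phiA d j (S i) then (1:ℝ) else 0) ≤ 9/25 := by
  set m := massA d (1/10) (1/2) (some j) with hmdef
  have hn300 : (300:ℝ) ≤ (n:ℝ) := by exact_mod_cast hn
  have hnpos : (0:ℝ) < n := by linarith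
  set c : ℝ := 2*(n:ℝ)/25 with hcdef
  have hc : 0 < c := by positivity
  have step1 : ∀ S : Fin n → ZA d,
      (∏ i, m (S i)) * (if c < ∑ i, phiA d j (S i) then (1:ℝ) else 0)
      ≤ (∏ i, m (S i)) * ((∑ i, phiA d j (S i))^2 / c^2) := by
    intro S
    refine mul_le_mul_of_nonneg_left ?_ (Finset.prod_nonneg fun i _ => mass_nonneg _ _)
    by_cases h : c < ∑ i, phiA d j (S i)
    · rw [if_pos h, le_div_iff₀ (by positivity), one_mul]
      nlinarith
    · rw [if_neg h]
      positivity
  refine (Finset.sum_le_sum fun S _ => step1 S).trans ?_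
  have step2 : ∑ S : Fin n → ZA d, (∏ i, m (S i)) * ((∑ i, phiA d j (S i))^2 / c^2)
      = ((n:ℝ) * (69/100)) / c^2 := by
    have : ∀ S : Fin n → ZA d, (∏ i, m (S i)) * ((∑ i, phiA d j (S i))^2 / c^2)
        = ((∏ i, m (S i)) * (∑ i, phiA d j (S i))^2) * (c^2)⁻¹ := fun S => by ring
    rw [Finset.sum_congr rfl fun S _ => this S, ← Finset.sum_mul,
      exp_sum_sq m (mass_sum_one j) (phiA d j) (phi_mean j), phi_var j]
    ring
  rw [step2]
  rw [div_le_iff₀ (by positivity)]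
  rw [hcdef]
  nlinarith


lemma sum_S_decomp (f : (Fin n → ZA d) → ℝ) :
    ∑ S : Fin n → ZA d, f S
      = ∑ X : Fin n → Fin d → Bool, ∑ Y : Fin n → Bool, ∑ A : Fin n → Option (Fin d),
          f (fun i => (X i, Y i, A i)) := by
  let e : ((Fin n → Fin d → Bool) × (Fin n → Bool) × (Fin n → Option (Fin d)))
      ≃ (Fin n → ZA d) :=
    ⟨fun p => fun i => (p.1 i, p.2.1 i, p.2.2 i),
     fun S => (fun i => (S i).1, fun i => (S i).2.1, fun i => (S i).2.2),
     fun p => rfl, fun S => rfl⟩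
  rw [← Equiv.sum_comp e f, Fintype.sum_prod_type]
  refine Finset.sum_congr rfl fun X _ => ?_
  rw [Fintype.sum_prod_type]
  rfl

lemma sum_X_swap (F : (Fin n → Fin d → Bool) → ℝ) :
    ∑ X : Fin n → Fin d → Bool, F X = ∑ C : Fin d → Fin n → Bool, F (fun i k => C k i) := by
  let e : (Fin d → Fin n → Bool) ≃ (Fin n → Fin d → Bool) :=
    ⟨fun C => fun i k => C k i, fun X => fun k i => X i k, fun C => rfl, fun X => rfl⟩
  rw [← Equiv.sum_comp e F]
  rfl

open Classical in
lemma p1 (j : Fin d) :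
    ∑ S : Fin n → ZA d, (∏ i, massA d (1/10) (1/2) (some j) (S i)) *
      (if ¬ (∃ k, k ≠ j ∧ ∀ i, (S i).1 k = !(S i).2.1) then (1:ℝ) else 0)
      ≤ (1 - ((2:ℝ)^n)⁻¹)^(d-1) := by
  have step1 : ∀ S : Fin n → ZA d,
      (∏ i, massA d (1/10) (1/2) (some j) (S i)) *
        (if ¬ (∃ k, k ≠ j ∧ ∀ i, (S i).1 k = !(S i).2.1) then (1:ℝ) else 0)
      ≤ (∏ i, massA d (1/10) (1/2) (some j) (S i)) *
        ∏ k, (if k = j then (1:ℝ)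
          else 1 - ∏ i, (if (S i).1 k = !(S i).2.1 then (1:ℝ) else 0)) := by
    intro S
    refine mul_le_mul_of_nonneg_left ?_ (Finset.prod_nonneg fun i _ => mass_nonneg _ _)
    by_cases h : ∃ k, k ≠ j ∧ ∀ i, (S i).1 k = !(S i).2.1
    · rw [if_neg (not_not_intro h)]
      refine Finset.prod_nonneg fun k _ => ?_
      by_cases hk : k = j
      · simp [hk]
      · rw [if_neg hk]
        have hle : ∏ i, (if (S i).1 k = !(S i).2.1 then (1:ℝ) else 0) ≤ 1 :=
          Finset.prod_le_one (fun i _ => by positivity) (fun i _ => by split_ifs <;> norm_num)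
        linarith
    · rw [if_pos h]
      have hone : (∏ k, (if k = j then (1:ℝ)
          else 1 - ∏ i, (if (S i).1 k = !(S i).2.1 then (1:ℝ) else 0))) = 1 := by
        refine Finset.prod_eq_one fun k _ => ?_
        by_cases hk : k = j
        · simp [hk]
        · rw [if_neg hk]
          push_neg at h
          obtain ⟨i0, hi0⟩ := h k hk
          have hzero : ∏ i, (if (S i).1 k = !(S i).2.1 then (1:ℝ) else 0) = 0 :=
            Finset.prod_eq_zero (Finset.mem_univ i0) (by rw [if_neg hi0])
          rw [hzero]
          norm_num
      rw [hone]
  refine (Finset.sum_le_sum fun S _ => step1 S).trans ?_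
  have hmass : ∀ S : Fin n → ZA d, (∏ i, massA d (1/10) (1/2) (some j) (S i))
      = ∏ i, (((2:ℝ)^d)⁻¹ * ((if (S i).2.1 then (3:ℝ)/5 else 2/5) *
          (if (S i).2.2 = some j then (1:ℝ) else 0))) :=
    fun S => Finset.prod_congr rfl fun i _ => mass_eq _ _
  rw [Finset.sum_congr rfl fun S _ => by rw [hmass S]]
  rw [sum_S_decomp (fun S => (∏ i, (((2:ℝ)^d)⁻¹ * ((if (S i).2.1 then (3:ℝ)/5 else 2/5) *
          (if (S i).2.2 = some j then (1:ℝ) else 0)))) *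
        ∏ k, (if k = j then (1:ℝ)
          else 1 - ∏ i, (if (S i).1 k = !(S i).2.1 then (1:ℝ) else 0)))]
  -- now sums over X, Y, A
  have hXY : ∀ (X : Fin n → Fin d → Bool) (Y : Fin n → Bool),
      ∑ A : Fin n → Option (Fin d),
        (∏ i, (((2:ℝ)^d)⁻¹ * ((if Y i then (3:ℝ)/5 else 2/5) *
            (if A i = some j then (1:ℝ) else 0)))) *
          ∏ k, (if k = j then (1:ℝ)
            else 1 - ∏ i, (if X i k = !(Y i) then (1:ℝ) else 0))
      = (∏ i, (((2:ℝ)^d)⁻¹ * (if Y i then (3:ℝ)/5 else 2/5))) *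
          ∏ k, (if k = j then (1:ℝ)
            else 1 - ∏ i, (if X i k = !(Y i) then (1:ℝ) else 0)) := by
    intro X Y
    set P : ℝ := ∏ i, (((2:ℝ)^d)⁻¹ * (if Y i then (3:ℝ)/5 else 2/5)) with hP
    set G : ℝ := ∏ k, (if k = j then (1:ℝ)
            else 1 - ∏ i, (if X i k = !(Y i) then (1:ℝ) else 0)) with hG
    have hsplit : ∀ A : Fin n → Option (Fin d),
        (∏ i, (((2:ℝ)^d)⁻¹ * ((if Y i then (3:ℝ)/5 else 2/5) *
            (if A i = some j then (1:ℝ) else 0)))) *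
          ∏ k, (if k = j then (1:ℝ)
            else 1 - ∏ i, (if X i k = !(Y i) then (1:ℝ) else 0))
        = (P * G) * ∏ i, (if A i = some j then (1:ℝ) else 0) := by
      intro A
      have hfac : ∀ i ∈ Finset.univ, ((2:ℝ)^d)⁻¹ * ((if Y i then (3:ℝ)/5 else 2/5) *
            (if A i = some j then (1:ℝ) else 0))
          = (((2:ℝ)^d)⁻¹ * (if Y i then (3:ℝ)/5 else 2/5)) *
            (if A i = some j then (1:ℝ) else 0) := fun i _ => by ring
      rw [Finset.prod_congr rfl hfac, Finset.prod_mul_distrib, hP, hG]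
      ring
    rw [Finset.sum_congr rfl fun A _ => hsplit A, ← Finset.mul_sum]
    rw [sum_prod_fun (fun (_ : Fin n) (a : Option (Fin d)) => if a = some j then (1:ℝ) else 0)]
    have hone : ∀ i : Fin n, (∑ a : Option (Fin d), (if a = some j then (1:ℝ) else 0)) = 1 := by
      intro i
      rw [Finset.sum_ite_eq' Finset.univ (some j) (fun _ => (1:ℝ))]
      simp
    rw [Finset.prod_congr rfl fun i _ => hone i]
    simp
  rw [Finset.sum_congr rfl fun X (_ : X ∈ Finset.univ) =>
    Finset.sum_congr rfl fun Y _ => hXY X Y]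
  rw [Finset.sum_comm]
  refine le_of_eq ?_
  have hsplitP : ∀ Y : Fin n → Bool, (∏ i, (((2:ℝ)^d)⁻¹ * (if Y i then (3:ℝ)/5 else 2/5)))
      = ((2:ℝ)^d)⁻¹^n * ∏ i, (if Y i then (3:ℝ)/5 else 2/5) := by
    intro Y
    rw [Finset.prod_mul_distrib, Finset.prod_const, Finset.card_univ, Fintype.card_fin]
  have hcol : ∀ Y : Fin n → Bool,
      (∑ X : Fin n → Fin d → Bool, ((2:ℝ)^d)⁻¹^n *
        ∏ k, (if k = j then (1:ℝ)
          else 1 - ∏ i, (if X i k = !(Y i) then (1:ℝ) else 0)))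
      = (1 - ((2:ℝ)^n)⁻¹)^(d-1) := by
    intro Y
    have hc2 : ((2:ℝ)^d)⁻¹^n = ∏ _k : Fin d, ((2:ℝ)^n)⁻¹ := by
      rw [Finset.prod_const, Finset.card_univ, Fintype.card_fin, inv_pow, inv_pow,
        ← pow_mul, ← pow_mul, Nat.mul_comm]
    have hmerge : ∀ X : Fin n → Fin d → Bool, (((2:ℝ)^d)⁻¹^n *
        ∏ k, (if k = j then (1:ℝ)
          else 1 - ∏ i, (if X i k = !(Y i) then (1:ℝ) else 0)))
        = ∏ k, (((2:ℝ)^n)⁻¹ * (if k = j then (1:ℝ)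
          else 1 - ∏ i, (if X i k = !(Y i) then (1:ℝ) else 0))) := by
      intro X
      rw [Finset.prod_mul_distrib, ← hc2]
    rw [Finset.sum_congr rfl fun X _ => hmerge X]
    rw [sum_X_swap (fun X => ∏ k, (((2:ℝ)^n)⁻¹ * (if k = j then (1:ℝ)
          else 1 - ∏ i, (if X i k = !(Y i) then (1:ℝ) else 0))))]
    rw [sum_prod_fun (fun (k : Fin d) (c : Fin n → Bool) => ((2:ℝ)^n)⁻¹ * (if k = j then (1:ℝ)
          else 1 - ∏ i, (if c i = !(Y i) then (1:ℝ) else 0)))]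
    have hcard : (∑ _c : Fin n → Bool, ((2:ℝ)^n)⁻¹) = 1 := by
      rw [Finset.sum_const, Finset.card_univ]
      simp [Fintype.card_fun]
    have hpat : (∑ c : Fin n → Bool, ∏ i, (if c i = !(Y i) then (1:ℝ) else 0)) = 1 := by
      rw [sum_prod_fun (fun (i : Fin n) (b : Bool) => if b = !(Y i) then (1:ℝ) else 0)]
      refine Finset.prod_eq_one fun i _ => ?_
      rw [Finset.sum_ite_eq' Finset.univ (!(Y i)) (fun _ => (1:ℝ))]
      simp
    have percol : ∀ k : Fin d, (∑ c : Fin n → Bool, ((2:ℝ)^n)⁻¹ * (if k = j then (1:ℝ)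
          else 1 - ∏ i, (if c i = !(Y i) then (1:ℝ) else 0)))
        = if k = j then (1:ℝ) else 1 - ((2:ℝ)^n)⁻¹ := by
      intro k
      by_cases hk : k = j
      · simp only [hk, eq_self_iff_true, if_true, mul_one]
        exact hcard
      · simp only [if_neg hk]
        have expand : ∀ c : Fin n → Bool, ((2:ℝ)^n)⁻¹ *
            (1 - ∏ i, (if c i = !(Y i) then (1:ℝ) else 0))
            = ((2:ℝ)^n)⁻¹ - ((2:ℝ)^n)⁻¹ * ∏ i, (if c i = !(Y i) then (1:ℝ) else 0) :=
          fun c => by ring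
        rw [Finset.sum_congr rfl fun c _ => expand c, Finset.sum_sub_distrib, hcard,
          ← Finset.mul_sum, hpat, mul_one]
    rw [Finset.prod_congr rfl fun k _ => percol k]
    rw [← Finset.prod_erase_mul Finset.univ _ (Finset.mem_univ j)]
    rw [if_pos rfl, mul_one]
    have hconst : ∀ k ∈ Finset.univ.erase j,
        (if k = j then (1:ℝ) else 1 - ((2:ℝ)^n)⁻¹) = 1 - ((2:ℝ)^n)⁻¹ :=
      fun k hk => if_neg (Finset.mem_erase.mp hk).1
    rw [Finset.prod_congr rfl hconst, Finset.prod_const,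
      Finset.card_erase_of_mem (Finset.mem_univ j), Finset.card_univ, Fintype.card_fin]
  have hYterm : ∀ Y : Fin n → Bool,
      (∑ X : Fin n → Fin d → Bool,
        (∏ i, (((2:ℝ)^d)⁻¹ * (if Y i then (3:ℝ)/5 else 2/5))) *
          ∏ k, (if k = j then (1:ℝ)
            else 1 - ∏ i, (if X i k = !(Y i) then (1:ℝ) else 0)))
      = (∏ i, (if Y i then (3:ℝ)/5 else 2/5)) * (1 - ((2:ℝ)^n)⁻¹)^(d-1) := by
    intro Y
    have h1 : ∀ X : Fin n → Fin d → Bool,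
        (∏ i, (((2:ℝ)^d)⁻¹ * (if Y i then (3:ℝ)/5 else 2/5))) *
          ∏ k, (if k = j then (1:ℝ)
            else 1 - ∏ i, (if X i k = !(Y i) then (1:ℝ) else 0))
        = (∏ i, (if Y i then (3:ℝ)/5 else 2/5)) * (((2:ℝ)^d)⁻¹^n *
          ∏ k, (if k = j then (1:ℝ)
            else 1 - ∏ i, (if X i k = !(Y i) then (1:ℝ) else 0))) := by
      intro X
      rw [hsplitP Y]
      ring
    rw [Finset.sum_congr rfl fun X _ => h1 X, ← Finset.mul_sum, hcol Y]
  rw [Finset.sum_congr rfl fun Y _ => hYterm Y, ← Finset.sum_mul,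
    sum_prod_fun (fun (_ : Fin n) (b : Bool) => if b then (3:ℝ)/5 else 2/5)]
  have hy1 : ∀ i : Fin n, (∑ b : Bool, (if b then (3:ℝ)/5 else 2/5)) = 1 := fun i => by
    rw [Fintype.sum_bool]
    norm_num
  rw [Finset.prod_congr rfl fun i _ => hy1 i, Finset.prod_const_one, one_mul]


lemma pow_bound (hn : 300 ≤ n) (hd : Real.log 10 * 2 ^ n + 1 ≤ (d : ℝ)) :
    (1 - ((2:ℝ)^n)⁻¹)^(d-1) ≤ 1/10 := by
  have h2n : (0:ℝ) < 2^n := by positivity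
  have h2n1 : (1:ℝ) ≤ 2^n := one_le_pow₀ (by norm_num : (1:ℝ) ≤ 2)
  have ht1 : ((2:ℝ)^n)⁻¹ ≤ 1 := by
    rw [inv_le_one_iff₀]
    right
    exact h2n1
  have hb : (0:ℝ) ≤ 1 - ((2:ℝ)^n)⁻¹ := by linarith
  have hstep : (1 - ((2:ℝ)^n)⁻¹) ≤ Real.exp (-((2:ℝ)^n)⁻¹) := by
    have := Real.add_one_le_exp (-((2:ℝ)^n)⁻¹)
    linarith
  have hlog : (0:ℝ) ≤ Real.log 10 := Real.log_nonneg (by norm_num)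
  have hd1R : (1:ℝ) ≤ (d:ℝ) := by nlinarith
  have hd1 : 1 ≤ d := by exact_mod_cast hd1R
  calc (1 - ((2:ℝ)^n)⁻¹)^(d-1) ≤ (Real.exp (-((2:ℝ)^n)⁻¹))^(d-1) :=
        pow_le_pow_left₀ hb hstep _
    _ = Real.exp ((d-1 : ℕ) * (-((2:ℝ)^n)⁻¹)) := by rw [← Real.exp_nat_mul]
    _ ≤ Real.exp (- Real.log 10) := by
        refine Real.exp_le_exp.mpr ?_
        have hcast : ((d-1 : ℕ) : ℝ) = (d:ℝ) - 1 := by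
          rw [Nat.cast_sub hd1, Nat.cast_one]
        rw [hcast]
        have hkey : Real.log 10 * 2^n ≤ (d:ℝ) - 1 := by linarith
        have := mul_le_mul_of_nonneg_right hkey (inv_nonneg.mpr h2n.le)
        rw [mul_assoc, mul_inv_cancel₀ h2n.ne', mul_one] at this
        nlinarith
    _ = 1/10 := by
        rw [Real.exp_neg, Real.exp_log (by norm_num : (0:ℝ) < 10)]
        norm_num


lemma ite_some (a b : Fin d) :
    (if some a = some b then (1:ℝ) else 0) = (if b = a then (1:ℝ) else 0) := by
  by_cases h : a = b
  · simp [h]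
  · simp [h, Ne.symm h]

lemma norm_had_pair (k j : Fin d) (hkj : k ≠ j) (x : Fin d → Bool) :
    ‖hadamard (stdVec d (some k) - stdVec d (some j)) x‖^2
      = (if x k then (1:ℝ) else 0) + (if x j then (1:ℝ) else 0) := by
  rw [normsq_had]
  have hterm : ∀ l : Fin d,
      ((stdVec d (some k) - stdVec d (some j)) l)^2 * (if x l then (1:ℝ) else 0)
      = (if l = k then (if x k then (1:ℝ) else 0) else 0)
        + (if l = j then (if x j then (1:ℝ) else 0) else 0) := by
    intro l
    have hl : (stdVec d (some k) - stdVec d (some j)) l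
        = (if l = k then (1:ℝ) else 0) - (if l = j then (1:ℝ) else 0) := by
      rw [PiLp.sub_apply, stdVec_apply, stdVec_apply, ite_some k l, ite_some j l]
    rw [hl]
    by_cases h1 : l = k <;> by_cases h2 : l = j
    · exact absurd (h1.symm.trans h2) hkj
    · subst h1
      simp [h2]
    · subst h2
      simp [h1]
    · simp [h1, h2]
  rw [Finset.sum_congr rfl fun l _ => hterm l, Finset.sum_add_distrib,
    Finset.sum_ite_eq' Finset.univ k (fun _ => if x k then (1:ℝ) else 0),
    Finset.sum_ite_eq' Finset.univ j (fun _ => if x j then (1:ℝ) else 0)]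
  simp

end Prob
end S3

set_option maxHeartbeats 2000000 in
open S3 in
theorem statement3 (n d : ℕ) (hn : 300 ≤ n)
    (hd : Real.log 10 * 2 ^ n + 1 ≤ (d : ℝ))
    (R : EuclideanSpace ℝ (Fin d) → ℝ) :
    ∃ jstar : Fin d,
      ConvexOn ℝ Set.univ (popLossA d (1/10) (1/2) (some jstar)) ∧
      LipschitzWith 1 (popLossA d (1/10) (1/2) (some jstar)) ∧
      popLossA d (1/10) (1/2) (some jstar) (stdVec d (some jstar)) = 0 ∧
      (∀ w, 0 ≤ popLossA d (1/10) (1/2) (some jstar) w) ∧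
      (∀ w, popLossA d (1/10) (1/2) (some jstar) w = 0 → w = stdVec d (some jstar)) ∧
      (⨅ w, popLossA d (1/10) (1/2) (some jstar) w) = 0 ∧
      ∀ wR : (Fin n → ZA d) → EuclideanSpace ℝ (Fin d),
        (∀ S w, ((n : ℝ))⁻¹ * ∑ i, fA d (wR S) (S i) + R (wR S)
            ≤ ((n : ℝ))⁻¹ * ∑ i, fA d w (S i) + R w) →
        (1 / 20000 : ℝ) ≤
          (∑ S : Fin n → ZA d,
              (∏ i, massA d (1/10) (1/2) (some jstar) (S i)) *
                popLossA d (1/10) (1/2) (some jstar) (wR S))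
            - ⨅ w, popLossA d (1/10) (1/2) (some jstar) w := by
  classical
  have hlog : (0:ℝ) ≤ Real.log 10 := Real.log_nonneg (by norm_num)
  have h2n1 : (1:ℝ) ≤ 2^n := one_le_pow₀ (by norm_num : (1:ℝ) ≤ 2)
  have hd1R : (1:ℝ) ≤ (d:ℝ) := by nlinarith
  have hdpos : 0 < d := by
    have : (0:ℝ) < (d:ℝ) := by linarith
    exact_mod_cast this
  have hnR : (0:ℝ) < (n:ℝ) := by
    have : (300:ℝ) ≤ (n:ℝ) := by exact_mod_cast hn
    linarith
  obtain ⟨jstar, -, hjmax⟩ := Finset.exists_max_image Finset.univ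
    (fun j : Fin d => sInf (R '' Metric.closedBall (stdVec d (some j)) (1/500)))
    ⟨⟨0, hdpos⟩, Finset.mem_univ _⟩
  refine ⟨jstar, popLoss_convex jstar, popLoss_lip jstar, popLoss_min jstar,
    fun w => popLoss_nonneg jstar w, fun w h => popLoss_eq_zero jstar w h,
    popLoss_inf jstar, ?_⟩
  intro wR hwR
  rw [popLoss_inf jstar, sub_zero]
  set ρ : Fin d → ℝ :=
    fun j => sInf (R '' Metric.closedBall (stdVec d (some j)) (1/500)) with hρdef
  have hS0 : ∀ (w : EuclideanSpace ℝ (Fin d)) (i : Fin n),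
      fA d w ((fun _ : Fin n => ((fun _ : Fin d => false), true, (none : Option (Fin d)))) i)
        = 0 := by
    intro w i
    simp [fA, hadamard_false]
  have hRmin : ∀ w, R (wR (fun _ => ((fun _ => false), true, none))) ≤ R w := by
    intro w
    have h := hwR (fun _ => ((fun _ => false), true, none)) w
    rw [Finset.sum_congr rfl fun i _ => hS0 _ i, Finset.sum_congr rfl fun i _ => hS0 w i] at h
    simpa using h
  have hbddim : ∀ j : Fin d, BddBelow (R '' Metric.closedBall (stdVec d (some j)) (1/500)) :=
    fun j => ⟨R (wR (fun _ => ((fun _ => false), true, none))),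
      by rintro y ⟨w, -, rfl⟩; exact hRmin w⟩
  have hne : ∀ j : Fin d, (R '' Metric.closedBall (stdVec d (some j)) (1/500)).Nonempty :=
    fun j => ⟨R (stdVec d (some j)),
      ⟨stdVec d (some j), Metric.mem_closedBall_self (by norm_num), rfl⟩⟩
  -- the core deterministic lemma
  have core : ∀ S : Fin n → ZA d,
      (∀ i, (S i).2.2 = some jstar) →
      (∃ k, k ≠ jstar ∧ ∀ i, (S i).1 k = !(S i).2.1) →
      (∑ i, phiA d jstar (S i) ≤ (2*(n:ℝ))/25) →
      (1/500 : ℝ) < ‖wR S - stdVec d (some jstar)‖ := by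
    intro S hA hk hphi
    obtain ⟨k, hkj, hcol⟩ := hk
    by_contra hcon
    push_neg at hcon
    have hfalb : ∀ i, -(1/500:ℝ) ≤ fA d (wR S) (S i) := by
      intro i
      have hnorm : ‖hadamard (wR S - stdVec d ((S i).2.2)) (S i).1‖ ≤ 1/500 := by
        rw [hA i]
        exact (norm_had_le _ _).trans hcon
      have hnn := norm_nonneg (hadamard (wR S - stdVec d ((S i).2.2)) (S i).1)
      unfold fA
      split_ifs
      · linarith
      · linarith
    have hL1 : -(1/500:ℝ) ≤ (n:ℝ)⁻¹ * ∑ i, fA d (wR S) (S i) := by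
      have h1 : (n:ℝ) * (-(1/500)) ≤ ∑ i, fA d (wR S) (S i) := by
        calc (n:ℝ) * (-(1/500)) = ∑ _i : Fin n, (-(1/500):ℝ) := by
              rw [Finset.sum_const, Finset.card_univ, Fintype.card_fin, nsmul_eq_mul]
          _ ≤ _ := Finset.sum_le_sum fun i _ => hfalb i
      have h2 := mul_le_mul_of_nonneg_left h1 (inv_nonneg.mpr hnR.le)
      rw [← mul_assoc, inv_mul_cancel₀ hnR.ne', one_mul] at h2
      exact h2
    have hRwb : ρ jstar ≤ R (wR S) := by
      refine csInf_le (hbddim jstar) ⟨wR S, ?_, rfl⟩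
      rw [Metric.mem_closedBall, dist_eq_norm]
      exact hcon
    obtain ⟨y, ⟨w', hw'ball, rfl⟩, hw'lt⟩ :=
      Real.lt_sInf_add_pos (hne k) (show (0:ℝ) < 1/100 by norm_num)
    have hw'close : ‖w' - stdVec d (some k)‖ ≤ 1/500 := by
      rw [← dist_eq_norm]
      exact Metric.mem_closedBall.mp hw'ball
    have hfaub : ∀ i, fA d w' (S i) ≤ phiA d jstar (S i) - 1/10 + 1/500 := by
      intro i
      have hstep1 : fA d w' (S i) ≤ fA d (stdVec d (some k)) (S i) + 1/500 := by
        have h := (abs_le.mp (fA_lip (S i) w' (stdVec d (some k)))).2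
        linarith [h, hw'close]
      have hstep2 : fA d (stdVec d (some k)) (S i) ≤ phiA d jstar (S i) - 1/10 := by
        have hnp := norm_had_pair k jstar hkj (S i).1
        set u := hadamard (stdVec d (some k) - stdVec d (some jstar)) (S i).1 with hu
        have hfa : fA d (stdVec d (some k)) (S i)
            = (if (S i).2.1 then (1:ℝ) else -1) * ‖u‖ := by
          unfold fA
          rw [hA i]
        rw [hfa]
        unfold phiA
        have hnnu := norm_nonneg u
        rcases Bool.dichotomy ((S i).2.1) with hyv | hyv
        · have hxk : (S i).1 k = true := by rw [hcol i, hyv]; rfl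
          simp only [hyv, Bool.false_eq_true, if_false]
          rcases Bool.dichotomy ((S i).1 jstar) with hxj | hxj
          · rw [hxk, hxj] at hnp
            have hsq : ‖u‖^2 = 1 := by rw [hnp]; norm_num
            nlinarith [hnnu]
          · rw [hxk, hxj] at hnp
            have hsq : ‖u‖^2 = 2 := by rw [hnp]; norm_num
            nlinarith [hnnu]
        · have hxk : (S i).1 k = false := by rw [hcol i, hyv]; rfl
          simp only [hyv, if_true]
          rcases Bool.dichotomy ((S i).1 jstar) with hxj | hxj
          · rw [hxk, hxj] at hnp
            have hsq : ‖u‖^2 = 0 := by rw [hnp]; norm_num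
            simp only [hxj, Bool.false_eq_true, if_false]
            nlinarith [hnnu]
          · rw [hxk, hxj] at hnp
            have hsq : ‖u‖^2 = 1 := by rw [hnp]; norm_num
            simp only [hxj, if_true]
            nlinarith [hnnu]
      linarith
    have hL2 : (n:ℝ)⁻¹ * ∑ i, fA d w' (S i) ≤ -(1/50) + 1/500 := by
      have h1 : ∑ i, fA d w' (S i) ≤ (n:ℝ) * (-(1/50) + 1/500) := by
        have ha : ∑ i, fA d w' (S i) ≤ ∑ i, (phiA d jstar (S i) - 1/10 + 1/500) :=
          Finset.sum_le_sum fun i _ => hfaub i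
        have hb : ∑ i, (phiA d jstar (S i) - 1/10 + 1/500)
            = (∑ i, phiA d jstar (S i)) + (n:ℝ) * (-(1/10) + 1/500) := by
          rw [Finset.sum_add_distrib, Finset.sum_sub_distrib, Finset.sum_const,
            Finset.sum_const, Finset.card_univ, Fintype.card_fin, nsmul_eq_mul,
            nsmul_eq_mul]
          ring
        rw [hb] at ha
        calc ∑ i, fA d w' (S i) ≤ (∑ i, phiA d jstar (S i)) + (n:ℝ) * (-(1/10) + 1/500) := ha
          _ ≤ (2*(n:ℝ))/25 + (n:ℝ) * (-(1/10) + 1/500) := by linarith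
          _ = (n:ℝ) * (-(1/50) + 1/500) := by ring
      have h2 := mul_le_mul_of_nonneg_left h1 (inv_nonneg.mpr hnR.le)
      rw [← mul_assoc, inv_mul_cancel₀ hnR.ne', one_mul] at h2
      exact h2
    have hcomp := hwR S w'
    have hRk : ρ k ≤ ρ jstar := hjmax k (Finset.mem_univ k)
    have hw'lt' : R w' < ρ k + 1/100 := hw'lt
    linarith
  -- assembling the expectation bound
  set m : ZA d → ℝ := massA d (1/10) (1/2) (some jstar) with hmdef
  have hW0 : ∀ S : Fin n → ZA d, 0 ≤ ∏ i, m (S i) :=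
    fun S => Finset.prod_nonneg fun i _ => mass_nonneg _ _
  have hWsum : ∑ S : Fin n → ZA d, ∏ i, m (S i) = 1 := by
    rw [sum_prod_fun (fun (_ : Fin n) (z : ZA d) => m z)]
    rw [Finset.prod_congr rfl fun i _ => mass_sum_one jstar]
    exact Finset.prod_const_one
  have hptF : ∀ S : Fin n → ZA d,
      (1/5000:ℝ) * (1 - (if ¬(∀ i, (S i).2.2 = some jstar) then (1:ℝ) else 0)
        - (if ¬(∃ k, k ≠ jstar ∧ ∀ i, (S i).1 k = !(S i).2.1) then (1:ℝ) else 0)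
        - (if (2*(n:ℝ))/25 < ∑ i, phiA d jstar (S i) then (1:ℝ) else 0))
      ≤ popLossA d (1/10) (1/2) (some jstar) (wR S) := by
    intro S
    have hF := popLoss_nonneg jstar (wR S)
    have ind01 : ∀ (P : Prop) (hP : Decidable P), (0:ℝ) ≤ @ite ℝ P hP 1 0 ∧ @ite ℝ P hP 1 0 ≤ 1 := by
      intro P hP
      constructor <;> split_ifs <;> norm_num
    by_cases h1 : ∀ i, (S i).2.2 = some jstar
    · rw [if_neg (not_not_intro h1)]
      by_cases h2 : ∃ k, k ≠ jstar ∧ ∀ i, (S i).1 k = !(S i).2.1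
      · rw [if_neg (not_not_intro h2)]
        by_cases h3 : (2*(n:ℝ))/25 < ∑ i, phiA d jstar (S i)
        · rw [if_pos h3]
          linarith
        · rw [if_neg h3]
          have hcore := core S h1 h2 (not_lt.mp h3)
          have hge := popLoss_ge jstar (wR S)
          linarith
      · rw [if_pos h2]
        have := (ind01 ((2*(n:ℝ))/25 < ∑ i, phiA d jstar (S i)) (by infer_instance)).1
        linarith
    · rw [if_pos h1]
      have ha := (ind01 (¬(∃ k, k ≠ jstar ∧ ∀ i, (S i).1 k = !(S i).2.1)) (by infer_instance)).1
      have hb := (ind01 ((2*(n:ℝ))/25 < ∑ i, phiA d jstar (S i)) (by infer_instance)).1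
      linarith
  have hsum1 : ∑ S : Fin n → ZA d, (∏ i, m (S i)) *
      (if ¬(∀ i, (S i).2.2 = some jstar) then (1:ℝ) else 0) = 0 := by
    refine Finset.sum_eq_zero fun S _ => ?_
    by_cases h : ∀ i, (S i).2.2 = some jstar
    · rw [if_neg (not_not_intro h), mul_zero]
    · push_neg at h
      obtain ⟨i0, hi0⟩ := h
      have hz : m (S i0) = 0 := by
        rw [hmdef, mass_eq, if_neg hi0]
        ring
      rw [Finset.prod_eq_zero (Finset.mem_univ i0) hz, zero_mul]
  have hsum2 : ∑ S : Fin n → ZA d, (∏ i, m (S i)) *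
      (if ¬(∃ k, k ≠ jstar ∧ ∀ i, (S i).1 k = !(S i).2.1) then (1:ℝ) else 0) ≤ 1/10 :=
    (p1 jstar).trans (pow_bound hn hd)
  have hsum3 : ∑ S : Fin n → ZA d, (∏ i, m (S i)) *
      (if (2*(n:ℝ))/25 < ∑ i, phiA d jstar (S i) then (1:ℝ) else 0) ≤ 9/25 :=
    cheb jstar hn
  have hmain : ∑ S : Fin n → ZA d, (∏ i, m (S i)) *
        ((1/5000:ℝ) * (1 - (if ¬(∀ i, (S i).2.2 = some jstar) then (1:ℝ) else 0)
          - (if ¬(∃ k, k ≠ jstar ∧ ∀ i, (S i).1 k = !(S i).2.1) then (1:ℝ) else 0)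
          - (if (2*(n:ℝ))/25 < ∑ i, phiA d jstar (S i) then (1:ℝ) else 0)))
      ≤ ∑ S : Fin n → ZA d, (∏ i, m (S i)) * popLossA d (1/10) (1/2) (some jstar) (wR S) :=
    Finset.sum_le_sum fun S _ => mul_le_mul_of_nonneg_left (hptF S) (hW0 S)
  have hexpand : ∑ S : Fin n → ZA d, (∏ i, m (S i)) *
        ((1/5000:ℝ) * (1 - (if ¬(∀ i, (S i).2.2 = some jstar) then (1:ℝ) else 0)
          - (if ¬(∃ k, k ≠ jstar ∧ ∀ i, (S i).1 k = !(S i).2.1) then (1:ℝ) else 0)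
          - (if (2*(n:ℝ))/25 < ∑ i, phiA d jstar (S i) then (1:ℝ) else 0)))
      = (1/5000:ℝ) * ((∑ S : Fin n → ZA d, ∏ i, m (S i))
          - (∑ S : Fin n → ZA d, (∏ i, m (S i)) *
              (if ¬(∀ i, (S i).2.2 = some jstar) then (1:ℝ) else 0))
          - (∑ S : Fin n → ZA d, (∏ i, m (S i)) *
              (if ¬(∃ k, k ≠ jstar ∧ ∀ i, (S i).1 k = !(S i).2.1) then (1:ℝ) else 0))
          - (∑ S : Fin n → ZA d, (∏ i, m (S i)) *
              (if (2*(n:ℝ))/25 < ∑ i, phiA d jstar (S i) then (1:ℝ) else 0))) := by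
    calc ∑ S : Fin n → ZA d, (∏ i, m (S i)) *
        ((1/5000:ℝ) * (1 - (if ¬(∀ i, (S i).2.2 = some jstar) then (1:ℝ) else 0)
          - (if ¬(∃ k, k ≠ jstar ∧ ∀ i, (S i).1 k = !(S i).2.1) then (1:ℝ) else 0)
          - (if (2*(n:ℝ))/25 < ∑ i, phiA d jstar (S i) then (1:ℝ) else 0)))
        = ∑ S : Fin n → ZA d,
          (((1/5000:ℝ) * (∏ i, m (S i))
            - (1/5000:ℝ) * ((∏ i, m (S i)) *
                (if ¬(∀ i, (S i).2.2 = some jstar) then (1:ℝ) else 0))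
            - (1/5000:ℝ) * ((∏ i, m (S i)) *
                (if ¬(∃ k, k ≠ jstar ∧ ∀ i, (S i).1 k = !(S i).2.1) then (1:ℝ) else 0)))
            - (1/5000:ℝ) * ((∏ i, m (S i)) *
                (if (2*(n:ℝ))/25 < ∑ i, phiA d jstar (S i) then (1:ℝ) else 0))) :=
          Finset.sum_congr rfl fun S _ => by ring
      _ = _ := by
          rw [Finset.sum_sub_distrib, Finset.sum_sub_distrib, Finset.sum_sub_distrib,
            ← Finset.mul_sum, ← Finset.mul_sum, ← Finset.mul_sum, ← Finset.mul_sum]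
          ring
  rw [hexpand] at hmain
  linarith
end

section
/- Let n ≥ 2 be even, let Z = {−1, 1}, let D be the uniform distribution on Z, and define f(w; z) = (1/(4√n) + z)·|w| for w ∈ ℝ. Then: (a) the population loss F(w) = E_{z∼D}[f(w;z)] equals |w|/(4√n), is convex, and has unique minimizer w* = 0 with F(0) = 0; and (b) for every η > 0, every T ≥ 1, and every initial point w₁ ≠ 0, the gradient descent iterates w_{t+1} = w_t − η·sign(w_t)·(1/(4√n) + (1/n)∑_{i=1}^n z_i) on an i.i.d. sample z₁,…,z_n ∼ D (with sign(0) = 0) have average ŵ_T = (1/T)∑_{t=1}^T w_t satisfying, with probability at least 1/(15e) over the sample, F(ŵ_T) ≥ |w₁|/(4√n) + η(T−1)/(32n); in particular E[F(ŵ_T)] − inf_{w∈ℝ} F(w) ≥ η(T−1)/(480·e·n). -/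
open scoped Classical

/-- The value of `z ∈ {−1, 1}` encoded by a boolean (`true ↦ +1`, `false ↦ −1`). -/
noncomputable def zval (b : Bool) : ℝ := if b then 1 else -1

/-- The loss `f(w; z) = (1/(4√n) + z)·|w|`. -/
noncomputable def f7 (n : ℕ) (w z : ℝ) : ℝ := (1 / (4 * Real.sqrt n) + z) * |w|

/-- The population loss `F(w) = |w|/(4√n)`. -/
noncomputable def F7 (n : ℕ) (w : ℝ) : ℝ := |w| / (4 * Real.sqrt n)

/-- Gradient descent iterates on the empirical loss: `w_{t+1} = w_t − η·sign(w_t)·(1/(4√n) + s)`,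
where `s = (1/n)∑ᵢ zᵢ` is the empirical mean of the sample. -/
noncomputable def gd7 (n : ℕ) (η w₁ s : ℝ) : ℕ → ℝ
  | 0 => w₁
  | t + 1 => gd7 n η w₁ s t - η * Real.sign (gd7 n η w₁ s t) * (1 / (4 * Real.sqrt n) + s)

/-!
When the sample mean `s` is at most `-1/(2√n)`, the empirical slope `1/(4√n) + s` is at most
`-1/(4√n)`: gradient descent then moves away from the minimizer `0` by a fixed amount at every
step, the iterates grow linearly in `|w|`, and their average satisfies
`F(ŵ_T) ≥ |w₁|/(4√n) + η(T-1)/(32n)`. For the Rademacher sum `S = n s` one has `E S² = n` and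
`E S⁴ ≤ 3n²`, so the Paley–Zygmund inequality gives `|S| > √n/2` with probability at least
`3/16`, and by symmetry `S ≤ -√n/2` with probability at least `3/32 ≥ 1/(15e)`. Markov's
inequality turns this into the bound in expectation.
-/

open Finset

noncomputable def sampleSum {n : ℕ} (z : Fin n → Bool) : ℝ := ∑ i, zval (z i)

lemma zval_not (b : Bool) : zval (!b) = -zval b := by
  cases b <;> simp [zval]

lemma sampleSum_not {n : ℕ} (z : Fin n → Bool) : sampleSum (fun i => !z i) = -sampleSum z := by
  simp only [sampleSum, zval_not, sum_neg_distrib]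

lemma sampleSum_cons {n : ℕ} (b : Bool) (z : Fin n → Bool) :
    sampleSum (Fin.cons b z : Fin (n + 1) → Bool) = zval b + sampleSum z := by
  simp only [sampleSum, Fin.sum_univ_succ, Fin.cons_zero, Fin.cons_succ]

lemma sum_comp_sampleSum_succ {n : ℕ} (φ : ℝ → ℝ) :
    ∑ z : Fin (n + 1) → Bool, φ (sampleSum z) =
      ∑ z : Fin n → Bool, (φ (sampleSum z + 1) + φ (sampleSum z - 1)) := by
  rw [← (Fin.consEquiv fun _ => Bool).sum_comp, Fintype.sum_prod_type, Fintype.sum_bool,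
    ← sum_add_distrib]
  refine sum_congr rfl fun z _ => ?_
  change φ (sampleSum (Fin.cons true z)) + φ (sampleSum (Fin.cons false z)) = _
  simp only [sampleSum_cons, zval, if_true, Bool.false_eq_true, if_false]
  rw [add_comm 1, neg_add_eq_sub]

lemma sum_sampleSum_sq (n : ℕ) : ∑ z : Fin n → Bool, sampleSum z ^ 2 = n * 2 ^ n := by
  induction n with
  | zero => simp [sampleSum]
  | succ n ih =>
    rw [sum_comp_sampleSum_succ (· ^ 2)]
    have hsq : ∀ x : ℝ, (x + 1) ^ 2 + (x - 1) ^ 2 = 2 * x ^ 2 + 2 := fun x => by ring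
    simp only [hsq, sum_add_distrib, ← mul_sum, ih, sum_const, card_univ, Fintype.card_fun,
      Fintype.card_bool, Fintype.card_fin, nsmul_eq_mul]
    push_cast
    ring

lemma sum_sampleSum_pow_four_le (n : ℕ) :
    ∑ z : Fin n → Bool, sampleSum z ^ 4 ≤ 3 * n ^ 2 * 2 ^ n := by
  induction n with
  | zero => simp [sampleSum]
  | succ n ih =>
    rw [sum_comp_sampleSum_succ (· ^ 4)]
    have h4 : ∀ x : ℝ, (x + 1) ^ 4 + (x - 1) ^ 4 = 2 * x ^ 4 + 12 * x ^ 2 + 2 := fun x => by ring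
    simp only [h4, sum_add_distrib, ← mul_sum, sum_sampleSum_sq, sum_const, card_univ,
      Fintype.card_fun, Fintype.card_bool, Fintype.card_fin, nsmul_eq_mul]
    push_cast
    rw [pow_succ (2 : ℝ) n]
    nlinarith [pow_pos (two_pos (α := ℝ)) n]

-- The Paley–Zygmund inequality, for a function on a finite set.
theorem sq_sum_sub_le_card_filter_mul_sum_sq {ι : Type*} (s : Finset ι) (X : ι → ℝ) {t : ℝ}
    (ht : 0 ≤ t) (h : t * #s ≤ ∑ i ∈ s, X i) :
    (∑ i ∈ s, X i - t * #s) ^ 2 ≤ #{i ∈ s | t < X i} * ∑ i ∈ s, X i ^ 2 := by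
  have hsmall : ∑ i ∈ s with ¬t < X i, X i ≤ t * #s :=
    calc ∑ i ∈ s with ¬t < X i, X i ≤ ∑ i ∈ s with ¬t < X i, t :=
          sum_le_sum fun i hi => not_lt.mp (mem_filter.mp hi).2
      _ = t * #{i ∈ s | ¬t < X i} := by rw [sum_const, nsmul_eq_mul, mul_comm]
      _ ≤ t * #s := by gcongr; exact filter_subset _ _
  have hlarge : ∑ i ∈ s, X i - t * #s ≤ ∑ i ∈ s with t < X i, X i := by
    linarith [sum_filter_add_sum_filter_not s (fun i => t < X i) X]
  calc (∑ i ∈ s, X i - t * #s) ^ 2 ≤ (∑ i ∈ s with t < X i, X i) ^ 2 :=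
        pow_le_pow_left₀ (sub_nonneg.mpr h) hlarge 2
    _ ≤ #{i ∈ s | t < X i} * ∑ i ∈ s with t < X i, X i ^ 2 := sq_sum_le_card_mul_sum_sq
    _ ≤ #{i ∈ s | t < X i} * ∑ i ∈ s, X i ^ 2 := by
        gcongr
        exact filter_subset _ _

lemma card_sampleSum_lt_neg (n : ℕ) (a : ℝ) :
    #{z : Fin n → Bool | sampleSum z < -a} = #{z : Fin n → Bool | a < sampleSum z} := by
  refine card_nbij' (fun z i => !z i) (fun z i => !z i) ?_ ?_ (fun z _ => by simp)
    (fun z _ => by simp) <;> intro z <;>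
    simp only [coe_filter, mem_univ, true_and, Set.mem_ofPred_eq, sampleSum_not] <;>
    intro h <;> linarith

lemma le_card_sampleSum_sq_gt (n : ℕ) (hn : 0 < n) :
    (3 / 16 : ℝ) * 2 ^ n ≤ #{z : Fin n → Bool | (n : ℝ) / 4 < sampleSum z ^ 2} := by
  have hpz := sq_sum_sub_le_card_filter_mul_sum_sq univ (fun z : Fin n → Bool => sampleSum z ^ 2)
    (t := n / 4) (by positivity)
  simp only [sum_sampleSum_sq, card_univ, Fintype.card_fun, Fintype.card_bool,
    Fintype.card_fin, Nat.cast_pow, Nat.cast_ofNat] at hpz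
  have h4 : ∑ z : Fin n → Bool, (sampleSum z ^ 2) ^ 2 ≤ 3 * n ^ 2 * 2 ^ n := by
    simpa only [← pow_mul] using sum_sampleSum_pow_four_le n
  have hn' : (0 : ℝ) < n := by exact_mod_cast hn
  refine le_of_mul_le_mul_right ?_ (by positivity : (0 : ℝ) < 3 * n ^ 2 * 2 ^ n)
  calc 3 / 16 * 2 ^ n * (3 * n ^ 2 * 2 ^ n) = (n * 2 ^ n - n / 4 * 2 ^ n : ℝ) ^ 2 := by ring
    _ ≤ _ := hpz (by gcongr; linarith)
    _ ≤ _ := by gcongr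

lemma card_sampleSum_le_neg_sqrt (n : ℕ) (hn : 0 < n) :
    3 / 32 * 2 ^ n ≤ (#{z : Fin n → Bool | sampleSum z ≤ -(√n / 2)} : ℝ) := by
  have hsplit : #{z : Fin n → Bool | (n : ℝ) / 4 < sampleSum z ^ 2} ≤
      #{z : Fin n → Bool | sampleSum z < -(√n / 2)} +
        #{z : Fin n → Bool | √n / 2 < sampleSum z} :=
    calc _ ≤ #{z : Fin n → Bool | sampleSum z < -(√n / 2) ∨ √n / 2 < sampleSum z} := by
          refine card_le_card (monotone_filter_right _ fun z _ hz => ?_)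
          have : (√n / 2) ^ 2 < sampleSum z ^ 2 := by
            rwa [div_pow, Real.sq_sqrt n.cast_nonneg, show ((2 : ℝ) ^ 2) = 4 by norm_num]
          rw [sq_lt_sq, abs_of_nonneg (by positivity), lt_abs] at this
          exact this.symm.imp_left fun h => by linarith
      _ ≤ _ := by rw [filter_or]; exact card_union_le _ _
  rw [← card_sampleSum_lt_neg] at hsplit
  have hmono : #{z : Fin n → Bool | sampleSum z < -(√n / 2)} ≤
      #{z : Fin n → Bool | sampleSum z ≤ -(√n / 2)} :=
    card_le_card (monotone_filter_right _ fun z _ hz => le_of_lt hz)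
  have : (#{z : Fin n → Bool | (n : ℝ) / 4 < sampleSum z ^ 2} : ℝ) ≤
      2 * #{z : Fin n → Bool | sampleSum z ≤ -(√n / 2)} := by
    exact_mod_cast hsplit.trans (by omega)
  linarith [le_card_sampleSum_sq_gt n hn]

lemma gd7_eq_sign_mul (n : ℕ) {η w₁ s : ℝ} (hη : 0 ≤ η) (hw : w₁ ≠ 0)
    (hs : 1 / (4 * √n) + s ≤ 0) (t : ℕ) :
    gd7 n η w₁ s t = Real.sign w₁ * (|w₁| - η * (1 / (4 * √n) + s) * t) := by
  have hσ := Real.sign_apply_eq_of_ne_zero w₁ hw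
  induction t with
  | zero =>
    rcases hw.lt_or_gt with h | h
    · simp [gd7, Real.sign_of_neg h, abs_of_neg h]
    · simp [gd7, Real.sign_of_pos h, abs_of_pos h]
  | succ t ih =>
    have hpos : 0 < |w₁| - η * (1 / (4 * √n) + s) * t := by
      have : η * (1 / (4 * √n) + s) * t ≤ 0 :=
        mul_nonpos_of_nonpos_of_nonneg (mul_nonpos_of_nonneg_of_nonpos hη hs) t.cast_nonneg
      linarith [abs_pos.mpr hw]
    have hsign : Real.sign (gd7 n η w₁ s t) = Real.sign w₁ := by
      rcases hσ with h | h
      · rw [ih, h, neg_one_mul, Real.sign_neg, Real.sign_of_pos hpos]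
      · rw [ih, h, one_mul, Real.sign_of_pos hpos]
    rw [gd7, hsign, ih]
    push_cast
    ring

lemma sum_range_gd7 (n : ℕ) {η w₁ s : ℝ} (hη : 0 ≤ η) (hw : w₁ ≠ 0)
    (hs : 1 / (4 * √n) + s ≤ 0) (T : ℕ) :
    ∑ t ∈ range T, gd7 n η w₁ s t =
      Real.sign w₁ * (T * |w₁| - η * (1 / (4 * √n) + s) * (T * (T - 1) / 2)) := by
  induction T with
  | zero => simp
  | succ T ih =>
    rw [sum_range_succ, ih, gd7_eq_sign_mul n hη hw hs]
    push_cast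
    ring

lemma F7_avg_gd7_ge (n : ℕ) (hn : 0 < n) {η w₁ s : ℝ} (hη : 0 ≤ η) (hw : w₁ ≠ 0)
    (hs : 1 / (4 * √n) + s ≤ -(1 / (4 * √n))) {T : ℕ} (hT : 1 ≤ T) :
    |w₁| / (4 * √n) + η * ((T : ℝ) - 1) / (32 * n) ≤
      F7 n ((T : ℝ)⁻¹ * ∑ t ∈ range T, gd7 n η w₁ s t) := by
  have hT1 : 0 ≤ (T : ℝ) - 1 := sub_nonneg.mpr (Nat.one_le_cast.mpr hT)
  have hσ : |Real.sign w₁| = 1 := by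
    rcases Real.sign_apply_eq_of_ne_zero w₁ hw with h | h <;> simp [h]
  set c := 1 / (4 * √n) + s with hc
  have hgain : η * (T - 1) / (8 * √n) ≤ -(η * c * ((T - 1) / 2)) := by
    have := mul_le_mul_of_nonneg_left hs (by positivity : 0 ≤ η * ((T : ℝ) - 1) / 2)
    field_simp at this ⊢
    linarith
  have hgain_nonneg : 0 ≤ η * (T - 1) / (8 * √n) := by positivity
  have havg : |(T : ℝ)⁻¹ * ∑ t ∈ range T, gd7 n η w₁ s t| = |w₁| - η * c * ((T - 1) / 2) := by
    rw [sum_range_gd7 n hη hw (hs.trans (neg_nonpos.mpr (by positivity))), abs_mul, abs_mul, hσ,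
      one_mul, abs_inv, Nat.abs_cast, ← hc,
      show T * |w₁| - η * c * (T * (T - 1) / 2) = T * (|w₁| - η * c * ((T - 1) / 2)) by ring,
      abs_mul, Nat.abs_cast, abs_of_nonneg (by linarith [abs_nonneg w₁]), inv_mul_cancel_left₀]
    positivity
  calc |w₁| / (4 * √n) + η * ((T : ℝ) - 1) / (32 * n)
      = (|w₁| + η * (T - 1) / (8 * √n)) / (4 * √n) := by
        rw [add_div, div_div, show 8 * √n * (4 * √n) = 32 * (√n * √n) by ring,
          Real.mul_self_sqrt (Nat.cast_nonneg n)]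
    _ ≤ (|w₁| - η * c * ((T - 1) / 2)) / (4 * √n) := by gcongr; linarith
    _ = _ := by rw [F7, havg]

lemma F7_nonneg (n : ℕ) (w : ℝ) : 0 ≤ F7 n w := by
  unfold F7; positivity

lemma iInf_F7 (n : ℕ) : ⨅ w, F7 n w = 0 :=
  IsGLB.ciInf_eq (IsLeast.isGLB ⟨⟨0, by simp [F7]⟩, by rintro _ ⟨w, rfl⟩; exact F7_nonneg n w⟩)

lemma convexOn_F7 (n : ℕ) : ConvexOn ℝ Set.univ (F7 n) := by
  have : F7 n = fun w => (4 * √n)⁻¹ • ‖w‖ := by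
    funext w
    rw [F7, Real.norm_eq_abs, smul_eq_mul, div_eq_inv_mul]
  rw [this]
  exact convexOn_univ_norm.smul (by positivity)

theorem mul_sum_ite_le_sum_mul {ι : Type*} (s : Finset ι) (p g : ι → ℝ) (b : ℝ)
    (hp : ∀ i ∈ s, 0 ≤ p i) (hg : ∀ i ∈ s, 0 ≤ g i) :
    b * ∑ i ∈ s, (if b ≤ g i then p i else 0) ≤ ∑ i ∈ s, p i * g i := by
  rw [mul_sum]
  refine sum_le_sum fun i hi => ?_
  split_ifs with h
  · rw [mul_comm]; exact mul_le_mul_of_nonneg_left h (hp i hi)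
  · rw [mul_zero]; exact mul_nonneg (hp i hi) (hg i hi)

lemma prob_F7_avg_gd7_ge (n : ℕ) (hn : 0 < n) {η w₁ : ℝ} (hη : 0 ≤ η) (hw : w₁ ≠ 0) {T : ℕ}
    (hT : 1 ≤ T) :
    1 / (15 * Real.exp 1) ≤
      ∑ z : Fin n → Bool,
        (if |w₁| / (4 * √n) + η * ((T : ℝ) - 1) / (32 * n) ≤
            F7 n ((T : ℝ)⁻¹ * ∑ t ∈ range T, gd7 n η w₁ ((n : ℝ)⁻¹ * sampleSum z) t)
          then ((1 : ℝ) / 2) ^ n else 0) := by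
  have hescape : ∀ z : Fin n → Bool, sampleSum z ≤ -(√n / 2) →
      1 / (4 * √n) + (n : ℝ)⁻¹ * sampleSum z ≤ -(1 / (4 * √n)) := by
    intro z hz
    have hmean : (n : ℝ)⁻¹ * (√n / 2) = 1 / (2 * √n) := by
      field_simp
      exact Real.sq_sqrt (Nat.cast_nonneg n)
    have := mul_le_mul_of_nonneg_left hz (inv_nonneg.mpr (Nat.cast_nonneg (α := ℝ) n))
    rw [mul_neg, hmean] at this
    have : 1 / (4 * √n) - 1 / (2 * √n) = -(1 / (4 * √n)) := by field_simp; ring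
    linarith
  calc 1 / (15 * Real.exp 1) ≤ 3 / 32 := by
        rw [div_le_div_iff₀ (by positivity) (by norm_num)]
        linarith [Real.add_one_le_exp 1]
    _ ≤ ((1 : ℝ) / 2) ^ n * #{z : Fin n → Bool | sampleSum z ≤ -(√n / 2)} := by
        have := card_sampleSum_le_neg_sqrt n hn
        rw [div_pow, one_pow, div_mul_eq_mul_div, le_div_iff₀ (by positivity)]
        linarith
    _ = ∑ z : Fin n → Bool, (if sampleSum z ≤ -(√n / 2) then ((1 : ℝ) / 2) ^ n else 0) := by
        rw [← sum_filter, sum_const, nsmul_eq_mul, mul_comm]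
    _ ≤ _ := sum_le_sum fun z _ => by
        split_ifs with h h'
        · exact le_rfl
        · exact absurd (F7_avg_gd7_ge n hn hη hw (hescape z h) hT) h'
        · positivity
        · exact le_rfl

theorem statement7_general (n : ℕ) (hn : 2 ≤ n) :
    -- (a) the population loss is `|w|/(4√n)`, convex, with unique minimizer 0 and `F(0) = 0`
    (∀ w : ℝ, ((1 : ℝ)/2) * f7 n w (zval true) + ((1 : ℝ)/2) * f7 n w (zval false) = F7 n w) ∧
    ConvexOn ℝ Set.univ (F7 n) ∧
    F7 n 0 = 0 ∧ (∀ w : ℝ, w ≠ 0 → 0 < F7 n w) ∧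
    -- (b) lower bound for gradient descent
    (∀ (η : ℝ), 0 < η → ∀ T : ℕ, 1 ≤ T → ∀ w₁ : ℝ, w₁ ≠ 0 →
      -- with probability at least 1/(15e) over the sample,
      -- `F(ŵ_T) ≥ |w₁|/(4√n) + η(T−1)/(32n)`
      (1 / (15 * Real.exp 1) ≤
        ∑ z : Fin n → Bool,
          (if |w₁| / (4 * Real.sqrt n) + η * ((T : ℝ) - 1) / (32 * n) ≤
              F7 n ((T : ℝ)⁻¹ * ∑ t ∈ Finset.range T,
                gd7 n η w₁ ((n : ℝ)⁻¹ * ∑ i, zval (z i)) t)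
            then ((1 : ℝ)/2) ^ n else 0)) ∧
      -- in particular, `E[F(ŵ_T)] − inf F ≥ η(T−1)/(480·e·n)`
      (η * ((T : ℝ) - 1) / (480 * Real.exp 1 * n) ≤
        (∑ z : Fin n → Bool,
            ((1 : ℝ)/2) ^ n * F7 n ((T : ℝ)⁻¹ * ∑ t ∈ Finset.range T,
              gd7 n η w₁ ((n : ℝ)⁻¹ * ∑ i, zval (z i)) t))
          - ⨅ w, F7 n w)) := by
  have hn0 : 0 < n := by omega
  refine ⟨fun w => by simp [f7, F7, zval]; ring, convexOn_F7 n, by simp [F7],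
    fun w hw => div_pos (abs_pos.mpr hw) (by positivity), fun η hη T hT w₁ hw => ?_⟩
  have hprob := prob_F7_avg_gd7_ge n hn0 hη.le hw hT
  refine ⟨hprob, ?_⟩
  have hT1 : 0 ≤ (T : ℝ) - 1 := sub_nonneg.mpr (Nat.one_le_cast.mpr hT)
  rw [iInf_F7, sub_zero]
  calc η * ((T : ℝ) - 1) / (480 * Real.exp 1 * n)
      = 1 / (15 * Real.exp 1) * (η * ((T : ℝ) - 1) / (32 * n)) := by field_simp; ring
    _ ≤ 1 / (15 * Real.exp 1) * (|w₁| / (4 * √n) + η * ((T : ℝ) - 1) / (32 * n)) := by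
        gcongr; exact le_add_of_nonneg_left (by positivity)
    _ ≤ (|w₁| / (4 * √n) + η * ((T : ℝ) - 1) / (32 * n)) * _ := by
        rw [mul_comm]; gcongr; exact hprob
    _ ≤ _ := mul_sum_ite_le_sum_mul _ _ _ _ (fun _ _ => by positivity) fun _ _ => F7_nonneg _ _

theorem statement7 (n : ℕ) (hn : 2 ≤ n) (hev : Even n) :
    -- (a) the population loss is `|w|/(4√n)`, convex, with unique minimizer 0 and `F(0) = 0`
    (∀ w : ℝ, ((1 : ℝ)/2) * f7 n w (zval true) + ((1 : ℝ)/2) * f7 n w (zval false) = F7 n w) ∧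
    ConvexOn ℝ Set.univ (F7 n) ∧
    F7 n 0 = 0 ∧ (∀ w : ℝ, w ≠ 0 → 0 < F7 n w) ∧
    -- (b) lower bound for gradient descent
    (∀ (η : ℝ), 0 < η → ∀ T : ℕ, 1 ≤ T → ∀ w₁ : ℝ, w₁ ≠ 0 →
      -- with probability at least 1/(15e) over the sample,
      -- `F(ŵ_T) ≥ |w₁|/(4√n) + η(T−1)/(32n)`
      (1 / (15 * Real.exp 1) ≤
        ∑ z : Fin n → Bool,
          (if |w₁| / (4 * Real.sqrt n) + η * ((T : ℝ) - 1) / (32 * n) ≤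
              F7 n ((T : ℝ)⁻¹ * ∑ t ∈ Finset.range T,
                gd7 n η w₁ ((n : ℝ)⁻¹ * ∑ i, zval (z i)) t)
            then ((1 : ℝ)/2) ^ n else 0)) ∧
      -- in particular, `E[F(ŵ_T)] − inf F ≥ η(T−1)/(480·e·n)`
      (η * ((T : ℝ) - 1) / (480 * Real.exp 1 * n) ≤
        (∑ z : Fin n → Bool,
            ((1 : ℝ)/2) ^ n * F7 n ((T : ℝ)⁻¹ * ∑ t ∈ Finset.range T,
              gd7 n η w₁ ((n : ℝ)⁻¹ * ∑ i, zval (z i)) t))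
          - ⨅ w, F7 n w)) :=
  statement7_general n hn
end

section
/- Let d ∈ ℕ, δ ∈ (0, 1/2], p ∈ (0, 1], and a ∈ {0, e₁, …, e_d}, and let D(δ, p, a) be the distribution on Z under which x has i.i.d. Bernoulli(p) coordinates, y = +1 with probability 1/2+δ and y = −1 with probability 1/2−δ, and α = a, all independent. Then the population loss F(w) = E_{z∼D(δ,p,a)}[f_A(w;z)] satisfies: F(w) = 2δ·E_x[‖(w−a)⊙x‖]; F is convex in w; F(a) = 0 and F(w) ≥ 0 for all w; F(w) ≥ 2δp‖w−a‖ for all w, so a is the unique minimizer of F; and every w with F(w) ≤ ε satisfies ‖w − a‖ ≤ ε/(2δp). -/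
open scoped RealInnerProductSpace

/-!
Averaging over the label `y` leaves `F(w) = 2δ · E_x ‖(w − a) ⊙ x‖`, and `v ↦ E_x ‖v ⊙ x‖` is a
seminorm, so `F` is convex and vanishes at `a`. By the triangle inequality (Jensen for the norm),
`E_x ‖v ⊙ x‖ ≥ ‖E_x [v ⊙ x]‖ = ‖p v‖`, because each coordinate of `x` has mean `p`. Hence `F` grows
at least linearly, with slope `2δp`, away from `a`, which gives the remaining claims.
-/

open Finset

noncomputable def bernoulliWeight {ι : Type*} [Fintype ι] (p : ℝ) (x : ι → Bool) : ℝ :=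
  ∏ j, if x j then p else 1 - p

section Bernoulli

variable {ι : Type*} [Fintype ι] {p : ℝ}

lemma bernoulliWeight_nonneg (hp : p ∈ Set.Icc (0 : ℝ) 1) (x : ι → Bool) :
    0 ≤ bernoulliWeight p x :=
  prod_nonneg fun j _ => by split <;> linarith [hp.1, hp.2]

lemma sum_bernoulliWeight_mul_ite [DecidableEq ι] (j : ι) :
    ∑ x : ι → Bool, bernoulliWeight p x * (if x j then 1 else 0) = p := by
  -- absorbing the indicator into the `j`-th factor makes the summand a product over coordinates
  let g : ι → Bool → ℝ := fun k b =>
    (if b then p else 1 - p) * (if k = j then (if b then 1 else 0) else 1)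
  have hfactor : ∀ x : ι → Bool,
      bernoulliWeight p x * (if x j then 1 else 0) = ∏ k, g k (x k) := by
    intro x
    rw [prod_mul_distrib, prod_ite_eq' univ j (fun k => if x k then (1 : ℝ) else 0)]
    simp [bernoulliWeight]
  rw [Fintype.sum_congr _ _ hfactor, ← Fintype.prod_sum]
  simp [g]

end Bernoulli

section Hadamard

variable {d : ℕ}

@[simp]
lemma hadamard_apply (v : EuclideanSpace ℝ (Fin d)) (x : Fin d → Bool) (j : Fin d) :
    hadamard v x j = v j * (if x j then 1 else 0) := rfl

@[simp]
lemma hadamard_zero (x : Fin d → Bool) : hadamard (0 : EuclideanSpace ℝ (Fin d)) x = 0 := by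
  ext j; simp

lemma hadamard_add (u v : EuclideanSpace ℝ (Fin d)) (x : Fin d → Bool) :
    hadamard (u + v) x = hadamard u x + hadamard v x := by
  ext j; simp only [hadamard_apply, PiLp.add_apply, add_mul]

lemma hadamard_smul (c : ℝ) (v : EuclideanSpace ℝ (Fin d)) (x : Fin d → Bool) :
    hadamard (c • v) x = c • hadamard v x := by
  ext j; simp

end Hadamard

noncomputable def expectedMaskedNorm (d : ℕ) (p : ℝ) (v : EuclideanSpace ℝ (Fin d)) : ℝ :=
  ∑ x : Fin d → Bool, bernoulliWeight p x * ‖hadamard v x‖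

section ExpectedMaskedNorm

variable {d : ℕ} {p : ℝ}

@[simp]
lemma expectedMaskedNorm_zero : expectedMaskedNorm d p 0 = 0 := by
  simp [expectedMaskedNorm]

lemma expectedMaskedNorm_add_le (hp : p ∈ Set.Icc (0 : ℝ) 1)
    (u v : EuclideanSpace ℝ (Fin d)) :
    expectedMaskedNorm d p (u + v) ≤ expectedMaskedNorm d p u + expectedMaskedNorm d p v := by
  simp only [expectedMaskedNorm, ← sum_add_distrib, ← mul_add, hadamard_add]
  gcongr with x
  · exact bernoulliWeight_nonneg hp x
  · exact norm_add_le _ _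

lemma expectedMaskedNorm_smul (c : ℝ) (v : EuclideanSpace ℝ (Fin d)) :
    expectedMaskedNorm d p (c • v) = ‖c‖ * expectedMaskedNorm d p v := by
  simp only [expectedMaskedNorm, hadamard_smul, norm_smul, mul_sum]
  exact sum_congr rfl fun x _ => by ring

lemma convexOn_expectedMaskedNorm (hp : p ∈ Set.Icc (0 : ℝ) 1) :
    ConvexOn ℝ Set.univ (expectedMaskedNorm d p) :=
  (Seminorm.of (𝕜 := ℝ) _ (expectedMaskedNorm_add_le hp) expectedMaskedNorm_smul).convexOn

lemma sum_bernoulliWeight_smul_hadamard (v : EuclideanSpace ℝ (Fin d)) :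
    ∑ x : Fin d → Bool, bernoulliWeight p x • hadamard v x = p • v := by
  ext j
  simp only [WithLp.ofLp_sum, WithLp.ofLp_smul, Finset.sum_apply, Pi.smul_apply, hadamard_apply,
    smul_eq_mul]
  calc ∑ x : Fin d → Bool, bernoulliWeight p x * (v j * if x j then 1 else 0)
      = v j * ∑ x : Fin d → Bool, bernoulliWeight p x * (if x j then 1 else 0) := by
        rw [mul_sum]; exact sum_congr rfl fun x _ => by ring
    _ = p * v j := by rw [sum_bernoulliWeight_mul_ite, mul_comm]

-- Jensen for the norm: `E‖v ⊙ x‖ ≥ ‖E[v ⊙ x]‖ = ‖p v‖`.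
lemma mul_norm_le_expectedMaskedNorm (hp : p ∈ Set.Icc (0 : ℝ) 1)
    (v : EuclideanSpace ℝ (Fin d)) :
    p * ‖v‖ ≤ expectedMaskedNorm d p v :=
  calc p * ‖v‖ = ‖∑ x : Fin d → Bool, bernoulliWeight p x • hadamard v x‖ := by
        rw [sum_bernoulliWeight_smul_hadamard, norm_smul, Real.norm_of_nonneg hp.1]
    _ ≤ ∑ x : Fin d → Bool, ‖bernoulliWeight p x • hadamard v x‖ := norm_sum_le _ _
    _ = expectedMaskedNorm d p v := by
        simp only [norm_smul, Real.norm_of_nonneg (bernoulliWeight_nonneg hp _), expectedMaskedNorm]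

end ExpectedMaskedNorm

section PopulationLoss

variable {d : ℕ}

lemma popLossA_eq (δ p : ℝ) (a : Option (Fin d)) (w : EuclideanSpace ℝ (Fin d)) :
    popLossA d δ p a w = 2 * δ * expectedMaskedNorm d p (w - stdVec d a) := by
  simp only [popLossA, massA, fA, Fintype.sum_prod_type, Fintype.sum_bool, expectedMaskedNorm,
    mul_sum, mul_ite, ite_mul, mul_zero, zero_mul, sum_ite_eq', mem_univ, if_true, if_false,
    Bool.false_eq_true]
  exact sum_congr rfl fun x _ => by rw [bernoulliWeight]; ring

lemma convexOn_popLossA {δ p : ℝ} (hδ : 0 ≤ δ) (hp : p ∈ Set.Icc (0 : ℝ) 1)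
    (a : Option (Fin d)) : ConvexOn ℝ Set.univ (popLossA d δ p a) := by
  have hshift := (convexOn_expectedMaskedNorm hp).translate_left (-stdVec d a)
  rw [Set.preimage_univ] at hshift
  have hF :
      popLossA d δ p a = fun w => (2 * δ) • (expectedMaskedNorm d p ∘ (· + -stdVec d a)) w :=
    funext fun w => by simp [popLossA_eq, sub_eq_add_neg]
  exact hF ▸ hshift.smul (by positivity)

end PopulationLoss

theorem statement16 (d : ℕ) (δ p : ℝ)
    (hδ : δ ∈ Set.Ioc (0 : ℝ) (1/2)) (hp : p ∈ Set.Ioc (0 : ℝ) 1)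
    (a : Option (Fin d)) :
    (∀ w, popLossA d δ p a w =
        2 * δ * ∑ x : Fin d → Bool,
          (∏ j, if x j then p else 1 - p) * ‖hadamard (w - stdVec d a) x‖) ∧
    ConvexOn ℝ Set.univ (popLossA d δ p a) ∧
    popLossA d δ p a (stdVec d a) = 0 ∧
    (∀ w, 0 ≤ popLossA d δ p a w) ∧
    (∀ w, 2 * δ * p * ‖w - stdVec d a‖ ≤ popLossA d δ p a w) ∧
    (∀ w, w ≠ stdVec d a → popLossA d δ p a (stdVec d a) < popLossA d δ p a w) ∧
    (∀ (ε : ℝ) (w : EuclideanSpace ℝ (Fin d)),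
        popLossA d δ p a w ≤ ε → ‖w - stdVec d a‖ ≤ ε / (2 * δ * p)) := by
  have hp' : p ∈ Set.Icc (0 : ℝ) 1 := Set.Ioc_subset_Icc_self hp
  have hc : 0 < 2 * δ * p := by have := hδ.1; have := hp.1; positivity
  have hmin : popLossA d δ p a (stdVec d a) = 0 := by simp [popLossA_eq]
  have hlb : ∀ w, 2 * δ * p * ‖w - stdVec d a‖ ≤ popLossA d δ p a w := fun w => by
    rw [popLossA_eq, mul_assoc]
    have := hδ.1
    gcongr
    exact mul_norm_le_expectedMaskedNorm hp' _
  refine ⟨popLossA_eq δ p a, convexOn_popLossA hδ.1.le hp' a, hmin,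
    fun w => le_trans (by positivity) (hlb w), hlb, fun w hw => ?_, fun ε w hε => ?_⟩
  · rw [hmin]
    exact (mul_pos hc (norm_pos_iff.2 (sub_ne_zero.2 hw))).trans_le (hlb w)
  · rw [le_div_iff₀ hc, mul_comm]
    exact (hlb w).trans hε
end

section
/- Let a < b be reals and let f : [a, b] → ℝ be differentiable with f L-Lipschitz and f' α-Lipschitz (α-smooth). Then for every ε > 0 there exists a function h : [a, b] → ℝ of the form h(x) = β₀ + ∑_{i=1}^{m} βᵢ·max{sᵢ(x − tᵢ), 0} with m ≤ ⌈(b − a)·max{L, α}/ε⌉ + 1, signs sᵢ ∈ {−1, +1}, real thresholds tᵢ, and coefficients |βᵢ| ≤ 2L for i ≥ 1, such that |f(x) − h(x)| ≤ ε for all x ∈ [a, b], and |f'(x) − h'(x)| ≤ ε at every x ∈ [a, b] at which h is differentiable. -/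
private noncomputable def Sl (f : ℝ → ℝ) (p : ℕ → ℝ) (w : ℝ) : ℕ → ℝ
  | 0 => 0
  | (j+1) => (f (p (j+1)) - f (p j)) / w

private lemma Sl_mul (f : ℝ → ℝ) (p : ℕ → ℝ) {w : ℝ} (hw : w ≠ 0) (j : ℕ) :
    Sl f p w (j+1) * w = f (p (j+1)) - f (p j) := by
  simp [Sl, div_mul_cancel₀ _ hw]

private lemma sum_slope (f : ℝ → ℝ) (p : ℕ → ℝ) {w : ℝ} (hw : w ≠ 0)
    (hpw : ∀ k, p (k+1) - p k = w) (x : ℝ) (k : ℕ) :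
    ∑ i ∈ Finset.range (k+1), (Sl f p w (i+1) - Sl f p w i) * (x - p i)
      = f (p (k+1)) - f (p 0) + Sl f p w (k+1) * (x - p (k+1)) := by
  induction k with
  | zero =>
    simp only [Finset.sum_range_succ, Finset.sum_range_zero, zero_add]
    have h0 : Sl f p w 0 = 0 := rfl
    rw [h0, sub_zero]
    linear_combination Sl_mul f p hw 0 + Sl f p w 1 * hpw 0
  | succ k ih =>
    rw [Finset.sum_range_succ, ih]
    linear_combination Sl_mul f p hw (k+1) + Sl f p w (k+2) * hpw (k+1)

set_option maxHeartbeats 1600000 in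
theorem statement19 (a b L α : ℝ) (hab : a < b) (f f' : ℝ → ℝ)
    (hderiv : ∀ x ∈ Set.Icc a b, HasDerivWithinAt f (f' x) (Set.Icc a b) x)
    (hLip : ∀ x ∈ Set.Icc a b, ∀ y ∈ Set.Icc a b, |f x - f y| ≤ L * |x - y|)
    (hSmooth : ∀ x ∈ Set.Icc a b, ∀ y ∈ Set.Icc a b, |f' x - f' y| ≤ α * |x - y|)
    (ε : ℝ) (hε : 0 < ε) :
    ∃ (m : ℕ) (β s t : ℕ → ℝ),
      m ≤ ⌈(b - a) * max L α / ε⌉₊ + 1 ∧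
      (∀ i ∈ Finset.range m, s (i + 1) = 1 ∨ s (i + 1) = -1) ∧
      (∀ i ∈ Finset.range m, |β (i + 1)| ≤ 2 * L) ∧
      (∀ x ∈ Set.Icc a b,
        |f x - (β 0 + ∑ i ∈ Finset.range m, β (i + 1) * max (s (i + 1) * (x - t (i + 1))) 0)|
          ≤ ε) ∧
      (∀ x ∈ Set.Icc a b, ∀ y : ℝ,
        HasDerivAt
          (fun x => β 0 + ∑ i ∈ Finset.range m, β (i + 1) * max (s (i + 1) * (x - t (i + 1))) 0)
          y x →
        |f' x - y| ≤ ε) := by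
  have hba : 0 < b - a := sub_pos.mpr hab
  have habs : |a - b| = b - a := by rw [abs_sub_comm]; exact abs_of_pos hba
  have hL0 : 0 ≤ L := by
    have h := hLip a ⟨le_refl a, hab.le⟩ b ⟨hab.le, le_refl b⟩
    rw [habs] at h
    nlinarith [abs_nonneg (f a - f b)]
  have hα0 : 0 ≤ α := by
    have h := hSmooth a ⟨le_refl a, hab.le⟩ b ⟨hab.le, le_refl b⟩
    rw [habs] at h
    nlinarith [abs_nonneg (f' a - f' b)]
  set M := max L α with hMdef
  have hM0 : 0 ≤ M := le_trans hL0 (le_max_left _ _)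
  have hLM : L ≤ M := le_max_left _ _
  have hαM : α ≤ M := le_max_right _ _
  set n := ⌈(b - a) * M / ε⌉₊ + 1 with hndef
  have hn0 : 0 < n := Nat.succ_pos _
  have hn0' : (0:ℝ) < n := by exact_mod_cast hn0
  set w := (b - a) / n with hwdef
  have hw : 0 < w := div_pos hba hn0'
  have hnw : (n:ℝ) * w = b - a := by
    rw [hwdef]; field_simp
  have hMw : M * w ≤ ε := by
    have h1 : (b - a) * M / ε ≤ (n : ℝ) := by
      calc (b - a) * M / ε ≤ (⌈(b - a) * M / ε⌉₊ : ℝ) := Nat.le_ceil _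
        _ ≤ n := by exact_mod_cast Nat.le_succ _
    have h2 : (b - a) * M ≤ (n:ℝ) * ε := by
      rw [div_le_iff₀ hε] at h1; linarith
    have : M * w = (b - a) * M / n := by rw [hwdef]; ring
    rw [this, div_le_iff₀ hn0']
    nlinarith
  set p : ℕ → ℝ := fun i => a + i * w with hpdef
  have hpw : ∀ k : ℕ, p (k+1) - p k = w := by
    intro k; simp only [hpdef]; push_cast; ring
  have hp0 : p 0 = a := by simp [hpdef]
  have hpn : p n = b := by simp only [hpdef]; rw [hnw]; ring
  have hpmono : ∀ {i j : ℕ}, i ≤ j → p i ≤ p j := by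
    intro i j hij
    have hij' : (i:ℝ) ≤ j := Nat.cast_le.mpr hij
    simp only [hpdef]
    nlinarith
  have hpmem : ∀ i ≤ n, p i ∈ Set.Icc a b := by
    intro i hi
    constructor
    · rw [← hp0]; exact hpmono (Nat.zero_le _)
    · rw [← hpn]; exact hpmono hi
  -- slope bound
  have hSbound : ∀ k, k < n → |Sl f p w (k+1)| ≤ L := by
    intro k hk
    have h := hLip (p (k+1)) (hpmem _ hk) (p k) (hpmem _ (le_of_lt hk))
    rw [hpw k, abs_of_pos hw] at h
    have : Sl f p w (k+1) = (f (p (k+1)) - f (p k)) / w := rfl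
    rw [this, abs_div, abs_of_pos hw, div_le_iff₀ hw]
    linarith
  have hSbound' : ∀ k ≤ n, |Sl f p w k| ≤ L := by
    intro k hk
    cases k with
    | zero => simpa [Sl] using hL0
    | succ j => exact hSbound j hk
  -- continuity of f
  have fcont : ContinuousOn f (Set.Icc a b) := fun x hx =>
    (hderiv x hx).continuousWithinAt
  -- MVT-based slope estimate
  have hslope : ∀ k, k < n → ∀ x ∈ Set.Icc (p k) (p (k+1)), |f' x - Sl f p w (k+1)| ≤ ε := by
    intro k hk x hx
    have hpk : p k < p (k+1) := by have := hpw k; linarith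
    have hsub : Set.Icc (p k) (p (k+1)) ⊆ Set.Icc a b :=
      Set.Icc_subset_Icc (hpmem k (le_of_lt hk)).1 (hpmem (k+1) hk).2
    obtain ⟨c, hc, hc'⟩ := exists_hasDerivAt_eq_slope f f' hpk (fcont.mono hsub)
      (fun z hz => by
        have hz1 : a < z := lt_of_le_of_lt (hpmem k (le_of_lt hk)).1 hz.1
        have hz2 : z < b := lt_of_lt_of_le hz.2 (hpmem (k+1) hk).2
        exact (hderiv z ⟨hz1.le, hz2.le⟩).hasDerivAt (Icc_mem_nhds hz1 hz2))
    have hcS : f' c = Sl f p w (k+1) := by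
      rw [hc', hpw k]; rfl
    have hxab : x ∈ Set.Icc a b := hsub hx
    have hcab : c ∈ Set.Icc a b := hsub ⟨hc.1.le, hc.2.le⟩
    have h := hSmooth x hxab c hcab
    have hxc : |x - c| ≤ w := by
      rw [abs_le]
      constructor
      · have := hpw k; linarith [hx.1, hc.2.le]
      · have := hpw k; linarith [hx.2, hc.1.le]
    rw [hcS] at h
    calc |f' x - Sl f p w (k+1)| ≤ α * |x - c| := h
      _ ≤ α * w := by nlinarith [abs_nonneg (x - c)]
      _ ≤ M * w := by nlinarith
      _ ≤ ε := hMw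
  -- the key formula
  have hkey : ∀ k, k < n → ∀ x : ℝ, p k ≤ x → x ≤ p (k+1) →
      f a + ∑ i ∈ Finset.range n, (Sl f p w (i+1) - Sl f p w i) * max (x - p i) 0
        = f (p (k+1)) + Sl f p w (k+1) * (x - p (k+1)) := by
    intro k hk x hx1 hx2
    rw [← Finset.sum_range_add_sum_Ico _ (Nat.succ_le_of_lt hk)]
    have htail : ∑ i ∈ Finset.Ico (k+1) n,
        (Sl f p w (i+1) - Sl f p w i) * max (x - p i) 0 = 0 := by
      apply Finset.sum_eq_zero
      intro i hi
      have : x ≤ p i := hx2.trans (hpmono (Finset.mem_Ico.mp hi).1)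
      rw [max_eq_right (by linarith), mul_zero]
    have hhead : ∑ i ∈ Finset.range (k+1),
        (Sl f p w (i+1) - Sl f p w i) * max (x - p i) 0
        = ∑ i ∈ Finset.range (k+1), (Sl f p w (i+1) - Sl f p w i) * (x - p i) := by
      apply Finset.sum_congr rfl
      intro i hi
      have : p i ≤ x := (hpmono (Nat.lt_succ_iff.mp (Finset.mem_range.mp hi))).trans hx1
      rw [max_eq_left (by linarith)]
    rw [htail, add_zero, hhead, sum_slope f p (ne_of_gt hw) hpw x k, hp0]
    ring
  -- choose an interval index for each x
  have hfind : ∀ x ∈ Set.Icc a b, ∃ k, k < n ∧ p k ≤ x ∧ x ≤ p (k+1) := by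
    intro x hx
    have hxa : 0 ≤ (x - a) / w := div_nonneg (sub_nonneg.mpr hx.1) hw.le
    refine ⟨min ⌊(x - a) / w⌋₊ (n - 1), ?_, ?_, ?_⟩
    · exact lt_of_le_of_lt (min_le_right _ _) (Nat.pred_lt hn0.ne')
    · have h1 : ((min ⌊(x - a) / w⌋₊ (n - 1) : ℕ) : ℝ) ≤ (x - a) / w :=
        le_trans (Nat.cast_le.mpr (min_le_left _ _)) (Nat.floor_le hxa)
      rw [le_div_iff₀ hw] at h1
      simp only [hpdef]; linarith
    · rcases le_or_gt ⌊(x - a) / w⌋₊ (n - 1) with h | h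
      · have hkf : min ⌊(x - a) / w⌋₊ (n - 1) = ⌊(x - a) / w⌋₊ := min_eq_left h
        have h1 : (x - a) / w < (⌊(x - a) / w⌋₊ : ℝ) + 1 := Nat.lt_floor_add_one _
        rw [div_lt_iff₀ hw] at h1
        rw [hkf]
        simp only [hpdef]; push_cast; linarith
      · have hkf : min ⌊(x - a) / w⌋₊ (n - 1) = n - 1 := min_eq_right h.le
        have hkn : min ⌊(x - a) / w⌋₊ (n - 1) + 1 = n := by omega
        rw [hkn, hpn]; exact hx.2
  clear_value M n w p
  -- the witnesses
  refine ⟨n, fun i => Nat.casesOn i (f a) (fun j => Sl f p w (j+1) - Sl f p w j),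
    fun _ => 1, fun i => p (i - 1), le_refl _, fun i _ => Or.inl rfl, ?_, ?_, ?_⟩
  · -- coefficient bound
    intro i hi
    have hi' := Finset.mem_range.mp hi
    show |Sl f p w (i+1) - Sl f p w i| ≤ 2 * L
    have h1 := hSbound' (i+1) hi'
    have h2 := hSbound' i hi'.le
    calc |Sl f p w (i+1) - Sl f p w i| ≤ |Sl f p w (i+1)| + |Sl f p w i| := abs_sub _ _
      _ ≤ 2 * L := by linarith
  · -- value approximation
    intro x hx
    obtain ⟨k, hk, hx1, hx2⟩ := hfind x hx
    show |f x - (f a + ∑ i ∈ Finset.range n,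
        (Sl f p w (i+1) - Sl f p w i) * max (1 * (x - p (i + 1 - 1))) 0)| ≤ ε
    simp only [one_mul, Nat.add_sub_cancel]
    rw [hkey k hk x hx1 hx2]
    have hwk := hpw k
    rcases le_or_gt (x - p k) (w / 2) with hhalf | hhalf
    · have halt : f (p (k+1)) + Sl f p w (k+1) * (x - p (k+1))
          = f (p k) + Sl f p w (k+1) * (x - p k) := by
        linear_combination (-1 : ℝ) * Sl_mul f p (ne_of_gt hw) k - Sl f p w (k+1) * hpw k
      rw [halt]
      have hb1 : |f x - f (p k)| ≤ L * (x - p k) := by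
        have h := hLip x hx (p k) (hpmem k hk.le)
        rwa [abs_of_nonneg (by linarith : (0:ℝ) ≤ x - p k)] at h
      have hb2 : |Sl f p w (k+1)| * (x - p k) ≤ L * (x - p k) :=
        mul_le_mul_of_nonneg_right (hSbound k hk) (by linarith)
      have hre : f x - (f (p k) + Sl f p w (k+1) * (x - p k))
          = (f x - f (p k)) - Sl f p w (k+1) * (x - p k) := by ring
      rw [hre]
      calc |(f x - f (p k)) - Sl f p w (k+1) * (x - p k)|
          ≤ |f x - f (p k)| + |Sl f p w (k+1) * (x - p k)| := abs_sub _ _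
        _ ≤ L * (x - p k) + L * (x - p k) := by
            rw [abs_mul, abs_of_nonneg (by linarith : (0:ℝ) ≤ x - p k)]
            exact add_le_add hb1 hb2
        _ ≤ L * w := by nlinarith [mul_le_mul_of_nonneg_left hhalf hL0]
        _ ≤ M * w := mul_le_mul_of_nonneg_right hLM hw.le
        _ ≤ ε := hMw
    · have hd0 : 0 ≤ p (k+1) - x := by linarith
      have hd1 : p (k+1) - x ≤ w / 2 := by linarith
      have hb1 : |f x - f (p (k+1))| ≤ L * (p (k+1) - x) := by
        have h := hLip x hx (p (k+1)) (hpmem (k+1) hk)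
        rwa [abs_of_nonpos (by linarith : x - p (k+1) ≤ 0), neg_sub] at h
      have hb2 : |Sl f p w (k+1)| * (p (k+1) - x) ≤ L * (p (k+1) - x) :=
        mul_le_mul_of_nonneg_right (hSbound k hk) hd0
      have hre : f x - (f (p (k+1)) + Sl f p w (k+1) * (x - p (k+1)))
          = (f x - f (p (k+1))) - Sl f p w (k+1) * (x - p (k+1)) := by ring
      rw [hre]
      calc |(f x - f (p (k+1))) - Sl f p w (k+1) * (x - p (k+1))|
          ≤ |f x - f (p (k+1))| + |Sl f p w (k+1) * (x - p (k+1))| := abs_sub _ _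
        _ ≤ L * (p (k+1) - x) + L * (p (k+1) - x) := by
            rw [abs_mul, abs_of_nonpos (by linarith : x - p (k+1) ≤ 0), neg_sub]
            exact add_le_add hb1 hb2
        _ ≤ L * w := by nlinarith [mul_le_mul_of_nonneg_left hd1 hL0]
        _ ≤ M * w := mul_le_mul_of_nonneg_right hLM hw.le
        _ ≤ ε := hMw
  · -- derivative approximation
    intro x hx y hder
    have hder1 : HasDerivAt (fun z => f a + ∑ i ∈ Finset.range n,
        (Sl f p w (i+1) - Sl f p w i) * max (1 * (z - p (i + 1 - 1))) 0) y x := hder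
    have hfeq : (fun z => f a + ∑ i ∈ Finset.range n,
          (Sl f p w (i+1) - Sl f p w i) * max (1 * (z - p (i + 1 - 1))) 0)
        = (fun z => f a + ∑ i ∈ Finset.range n,
          (Sl f p w (i+1) - Sl f p w i) * max (z - p i) 0) := by
      funext z; simp only [one_mul, Nat.add_sub_cancel]
    rw [hfeq] at hder1
    rcases lt_or_eq_of_le hx.2 with hxb | hxb
    · -- x < b : use right neighborhood
      obtain ⟨k, hk, hx1, hx2⟩ : ∃ k, k < n ∧ p k ≤ x ∧ x < p (k+1) := by
        have hxa : 0 ≤ (x - a) / w := div_nonneg (sub_nonneg.mpr hx.1) hw.le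
        refine ⟨⌊(x - a) / w⌋₊, ?_, ?_, ?_⟩
        · rw [Nat.floor_lt hxa, div_lt_iff₀ hw]
          linarith [hnw]
        · have h1 : ((⌊(x - a) / w⌋₊ : ℕ) : ℝ) ≤ (x - a) / w := Nat.floor_le hxa
          rw [le_div_iff₀ hw] at h1
          simp only [hpdef]; linarith
        · have h1 : (x - a) / w < (⌊(x - a) / w⌋₊ : ℝ) + 1 := Nat.lt_floor_add_one _
          rw [div_lt_iff₀ hw] at h1
          simp only [hpdef]; push_cast; linarith
      have hlin : HasDerivWithinAt
          (fun z => f (p (k+1)) + Sl f p w (k+1) * (z - p (k+1)))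
          (Sl f p w (k+1)) (Set.Ici x) x := by
        have h : HasDerivAt (fun z => f (p (k+1)) + Sl f p w (k+1) * (z - p (k+1)))
            (Sl f p w (k+1)) x := by
          simpa using (((hasDerivAt_id x).sub_const (p (k+1))).const_mul
            (Sl f p w (k+1))).const_add (f (p (k+1)))
        exact h.hasDerivWithinAt
      have hmem : Set.Ici x ∩ Set.Iio (p (k+1)) ∈ nhdsWithin x (Set.Ici x) :=
        Filter.inter_mem self_mem_nhdsWithin (nhdsWithin_le_nhds (Iio_mem_nhds hx2))
      have h₁ : (fun z => f (p (k+1)) + Sl f p w (k+1) * (z - p (k+1)))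
          =ᶠ[nhdsWithin x (Set.Ici x)]
          (fun z => f a + ∑ i ∈ Finset.range n,
            (Sl f p w (i+1) - Sl f p w i) * max (z - p i) 0) :=
        Filter.eventuallyEq_of_mem hmem
          (fun z hz => (hkey k hk z (hx1.trans hz.1) hz.2.le).symm)
      have hd2 := (hder1.hasDerivWithinAt (s := Set.Ici x)).congr_of_eventuallyEq h₁
        (hkey k hk x hx1 hx2.le).symm
      have e1 := hd2.derivWithin (uniqueDiffOn_Ici x x Set.self_mem_Ici)
      have e2 := hlin.derivWithin (uniqueDiffOn_Ici x x Set.self_mem_Ici)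
      have hyS : y = Sl f p w (k+1) := by rw [← e1, e2]
      rw [hyS]
      exact hslope k hk x ⟨hx1, hx2.le⟩
    · -- x = b : use left neighborhood
      have hk : n - 1 < n := Nat.pred_lt hn0.ne'
      have hkn : n - 1 + 1 = n := Nat.succ_pred_eq_of_pos hn0
      have hpk1 : p (n - 1 + 1) = b := by rw [hkn, hpn]
      have hx2 : x ≤ p (n - 1 + 1) := by rw [hpk1, ← hxb]
      have hx1 : p (n - 1) < x := by
        have h := hpw (n - 1)
        rw [hpk1] at h
        rw [← hxb] at *
        linarith
      have hlin : HasDerivWithinAt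
          (fun z => f (p (n - 1 + 1)) + Sl f p w (n - 1 + 1) * (z - p (n - 1 + 1)))
          (Sl f p w (n - 1 + 1)) (Set.Iic x) x := by
        have h : HasDerivAt (fun z => f (p (n - 1 + 1)) + Sl f p w (n - 1 + 1) * (z - p (n - 1 + 1)))
            (Sl f p w (n - 1 + 1)) x := by
          simpa using (((hasDerivAt_id x).sub_const (p (n - 1 + 1))).const_mul
            (Sl f p w (n - 1 + 1))).const_add (f (p (n - 1 + 1)))
        exact h.hasDerivWithinAt
      have hmem : Set.Iic x ∩ Set.Ioi (p (n - 1)) ∈ nhdsWithin x (Set.Iic x) :=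
        Filter.inter_mem self_mem_nhdsWithin (nhdsWithin_le_nhds (Ioi_mem_nhds hx1))
      have h₁ : (fun z => f (p (n - 1 + 1)) + Sl f p w (n - 1 + 1) * (z - p (n - 1 + 1)))
          =ᶠ[nhdsWithin x (Set.Iic x)]
          (fun z => f a + ∑ i ∈ Finset.range n,
            (Sl f p w (i+1) - Sl f p w i) * max (z - p i) 0) :=
        Filter.eventuallyEq_of_mem hmem
          (fun z hz => (hkey (n - 1) hk z hz.2.le (hz.1.trans hx2)).symm)
      have hd2 := (hder1.hasDerivWithinAt (s := Set.Iic x)).congr_of_eventuallyEq h₁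
        (hkey (n - 1) hk x hx1.le hx2).symm
      have e1 := hd2.derivWithin (uniqueDiffOn_Iic x x Set.self_mem_Iic)
      have e2 := hlin.derivWithin (uniqueDiffOn_Iic x x Set.self_mem_Iic)
      have hyS : y = Sl f p w (n - 1 + 1) := by rw [← e1, e2]
      rw [hyS]
      exact hslope (n - 1) hk x ⟨hx1.le, hx2⟩
end
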